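/- arXiv:2512.13067 — 9 statements merged into one kernel-verified Lean document; each statement's English description precedes it below -/
import Mathlib

section
/- Let B be the Barker orbit kernel and M the Metropolis–Hastings orbit kernel associated with π and a fixed partition of X into orbits, and let G be the corresponding Gibbs orbit kernel. Then the matrix powers B^t converge entrywise to G as t → ∞. Moreover, if no orbit is a two-element set {x,y} with π(x) = π(y) (i.e., M has no deterministic 2-cycle on any orbit), then the matrix powers M^t also converge entrywise to G as t → ∞. -/
open Matrix Finset Filter Topology

/-- Total mass of the orbit (block) `i` under `π`. -/
noncomputable def orbMass {n k : ℕ} (π : Fin n → ℝ) (part : Fin n → Fin k) (i : Fin k) : ℝ :=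
  ∑ z ∈ Finset.univ.filter (fun z => part z = i), π z

/-- Number of states in the orbit (block) `i`. -/
def orbCard {n k : ℕ} (part : Fin n → Fin k) (i : Fin k) : ℕ :=
  (Finset.univ.filter (fun z => part z = i)).card

/-- The Gibbs orbit kernel. -/
noncomputable def gibbsKer {n k : ℕ} (π : Fin n → ℝ) (part : Fin n → Fin k) :
    Matrix (Fin n) (Fin n) ℝ :=
  Matrix.of fun x y => if part y = part x then π y / orbMass π part (part x) else 0

/-- The Metropolis–Hastings orbit kernel. -/
noncomputable def mhKer {n k : ℕ} (π : Fin n → ℝ) (part : Fin n → Fin k) :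
    Matrix (Fin n) (Fin n) ℝ :=
  Matrix.of fun x y =>
    if x = y then
      1 - ∑ z ∈ Finset.univ.filter (fun z => z ≠ x ∧ part z = part x),
            min 1 (π z / π x) / ((orbCard part (part x) : ℝ) - 1)
    else if part y = part x then
      min 1 (π y / π x) / ((orbCard part (part x) : ℝ) - 1)
    else 0

/-- The Barker orbit kernel. -/
noncomputable def barkerKer {n k : ℕ} (π : Fin n → ℝ) (part : Fin n → Fin k) :
    Matrix (Fin n) (Fin n) ℝ :=
  Matrix.of fun x y =>
    if x = y then
      1 - ∑ z ∈ Finset.univ.filter (fun z => z ≠ x ∧ part z = part x),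
            (π z / (π x + π z)) / ((orbCard part (part x) : ℝ) - 1)
    else if part y = part x then
      (π y / (π x + π y)) / ((orbCard part (part x) : ℝ) - 1)
    else 0

namespace Stmt0Aux

variable {n k : ℕ}

/-- The orbit (block) of `y` as a finset. -/
def Orb (part : Fin n → Fin k) (y : Fin n) : Finset (Fin n) :=
  Finset.univ.filter (fun z => part z = part y)

lemma mem_Orb {part : Fin n → Fin k} {z y : Fin n} : z ∈ Orb part y ↔ part z = part y := by
  simp [Orb]

lemma self_mem_Orb (part : Fin n → Fin k) (y : Fin n) : y ∈ Orb part y := mem_Orb.2 rfl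

lemma Orb_nonempty (part : Fin n → Fin k) (y : Fin n) : (Orb part y).Nonempty :=
  ⟨y, self_mem_Orb _ _⟩

lemma Orb_congr {part : Fin n → Fin k} {x y : Fin n} (h : part x = part y) :
    Orb part x = Orb part y := by
  ext z; simp [mem_Orb, h]

section Core

variable (P : Matrix (Fin n) (Fin n) ℝ) (part : Fin n → Fin k)

lemma pow_block (hPblock : ∀ x y, part x ≠ part y → P x y = 0) :
    ∀ (t : ℕ) (x y : Fin n), part x ≠ part y → (P ^ t) x y = 0 := by
  intro t
  induction t with
  | zero =>
      intro x y h
      have : x ≠ y := fun hxy => h (by rw [hxy])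
      simp [Matrix.one_apply, this]
  | succ t ih =>
      intro x y h
      rw [pow_succ, Matrix.mul_apply]
      refine Finset.sum_eq_zero fun z _ => ?_
      by_cases hz : part x = part z
      · rw [hPblock z y (by rw [← hz]; exact h), mul_zero]
      · rw [ih x z hz, zero_mul]

lemma pow_nonneg' (hP0 : ∀ x y, 0 ≤ P x y) :
    ∀ (t : ℕ) (x y : Fin n), 0 ≤ (P ^ t) x y := by
  intro t
  induction t with
  | zero => intro x y; by_cases h : x = y <;> simp [Matrix.one_apply, h]
  | succ t ih =>
      intro x y
      rw [pow_succ, Matrix.mul_apply]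
      exact Finset.sum_nonneg fun z _ => mul_nonneg (ih x z) (hP0 z y)

lemma row_orb (hPblock : ∀ x y, part x ≠ part y → P x y = 0)
    (hProw : ∀ x, ∑ y, P x y = 1) (x : Fin n) :
    ∑ z ∈ Orb part x, P x z = 1 := by
  rw [Finset.sum_subset (Finset.subset_univ _) (fun z _ hz => hPblock x z (fun h => hz (mem_Orb.2 h.symm)))]
  exact hProw x

lemma pow_row_orb (hPblock : ∀ x y, part x ≠ part y → P x y = 0)
    (hProw : ∀ x, ∑ y, P x y = 1) :
    ∀ (t : ℕ) (x : Fin n), ∑ z ∈ Orb part x, (P ^ t) x z = 1 := by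
  intro t
  induction t with
  | zero =>
      intro x
      rw [Finset.sum_eq_single x (fun z _ hz => by simp [Matrix.one_apply, Ne.symm hz])
        (fun h => absurd (self_mem_Orb part x) h)]
      simp
  | succ t ih =>
      intro x
      have key : ∀ z ∈ Orb part x, (P ^ (t+1)) x z
          = ∑ w ∈ Orb part x, (P ^ t) x w * P w z := by
        intro z hz
        rw [pow_succ, Matrix.mul_apply]
        rw [eq_comm]
        refine Finset.sum_subset (Finset.subset_univ _) ?_
        intro w _ hw
        rw [pow_block P part hPblock t x w (fun h => hw (mem_Orb.2 h.symm)), zero_mul]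
      rw [Finset.sum_congr rfl key, Finset.sum_comm]
      have : ∀ w ∈ Orb part x, ∑ z ∈ Orb part x, (P ^ t) x w * P w z = (P ^ t) x w := by
        intro w hw
        rw [← Finset.mul_sum, ← Orb_congr (mem_Orb.1 hw), row_orb P part hPblock hProw w, mul_one]
      rw [Finset.sum_congr rfl this, ih]

end Core

section Core2

variable (P : Matrix (Fin n) (Fin n) ℝ) (part : Fin n → Fin k)

/-- max of `(P^t) · y` over the orbit of `y`. -/
noncomputable def Mt (t : ℕ) (y : Fin n) : ℝ :=
  (Orb part y).sup' (Orb_nonempty part y) (fun x => (P ^ t) x y)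

/-- min of `(P^t) · y` over the orbit of `y`. -/
noncomputable def mt (t : ℕ) (y : Fin n) : ℝ :=
  (Orb part y).inf' (Orb_nonempty part y) (fun x => (P ^ t) x y)

lemma mt_le_Mt (t : ℕ) (y : Fin n) : mt P part t y ≤ Mt P part t y := by
  unfold mt Mt
  exact le_trans (Finset.inf'_le _ (self_mem_Orb part y))
    (Finset.le_sup' (fun x => (P ^ t) x y) (self_mem_Orb part y))

lemma le_Mt {t : ℕ} {x y : Fin n} (hx : x ∈ Orb part y) : (P ^ t) x y ≤ Mt P part t y :=
  Finset.le_sup' (fun x => (P ^ t) x y) hx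

lemma mt_le {t : ℕ} {x y : Fin n} (hx : x ∈ Orb part y) : mt P part t y ≤ (P ^ t) x y :=
  Finset.inf'_le _ hx

variable (hP0 : ∀ x y, 0 ≤ P x y)
  (hPblock : ∀ x y, part x ≠ part y → P x y = 0)
  (hProw : ∀ x, ∑ y, P x y = 1)

include hP0 hPblock hProw

omit hP0 hProw in
/-- One-step expansion restricted to the orbit. -/
lemma pow_add_orb (s t : ℕ) (x y : Fin n) :
    (P ^ (s + t)) x y = ∑ z ∈ Orb part y, (P ^ s) x z * (P ^ t) z y := by
  rw [pow_add, Matrix.mul_apply, eq_comm]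
  refine Finset.sum_subset (Finset.subset_univ _) ?_
  intro z _ hz
  rw [pow_block P part hPblock t z y (fun h => hz (mem_Orb.2 h)), mul_zero]

lemma Mt_succ_le (t : ℕ) (y : Fin n) : Mt P part (t + 1) y ≤ Mt P part t y := by
  refine Finset.sup'_le _ _ fun x hx => ?_
  have h1 : (1 : ℕ) + t = t + 1 := by omega
  rw [← h1, pow_add_orb P part hPblock 1 t x y]
  calc ∑ z ∈ Orb part y, (P ^ 1) x z * (P ^ t) z y
      ≤ ∑ z ∈ Orb part y, (P ^ 1) x z * Mt P part t y := by
        refine Finset.sum_le_sum fun z hz => ?_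
        exact mul_le_mul_of_nonneg_left (le_Mt P part hz) (by rw [pow_one]; exact hP0 x z)
    _ = Mt P part t y := by
        rw [← Finset.sum_mul, ← Orb_congr (mem_Orb.1 hx), pow_one,
          row_orb P part hPblock hProw x, one_mul]

lemma le_mt_succ (t : ℕ) (y : Fin n) : mt P part t y ≤ mt P part (t + 1) y := by
  refine Finset.le_inf' _ _ fun x hx => ?_
  have h1 : (1 : ℕ) + t = t + 1 := by omega
  rw [← h1, pow_add_orb P part hPblock 1 t x y]
  calc mt P part t y
      = ∑ z ∈ Orb part y, (P ^ 1) x z * mt P part t y := by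
        rw [← Finset.sum_mul, ← Orb_congr (mem_Orb.1 hx), pow_one,
          row_orb P part hPblock hProw x, one_mul]
    _ ≤ ∑ z ∈ Orb part y, (P ^ 1) x z * (P ^ t) z y := by
        refine Finset.sum_le_sum fun z hz => ?_
        exact mul_le_mul_of_nonneg_left (mt_le P part hz) (by rw [pow_one]; exact hP0 x z)

lemma Dt_antitone (y : Fin n) :
    Antitone (fun t => Mt P part t y - mt P part t y) := by
  refine antitone_nat_of_succ_le fun t => ?_
  have h1 := Mt_succ_le P part hP0 hPblock hProw t y
  have h2 := le_mt_succ P part hP0 hPblock hProw t y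
  show Mt P part (t+1) y - mt P part (t+1) y ≤ Mt P part t y - mt P part t y
  linarith

end Core2

section Core3

variable (P : Matrix (Fin n) (Fin n) ℝ) (part : Fin n → Fin k)

/-- minimal `s`-step transition probability within the orbit of `y`. -/
noncomputable def dlt (s : ℕ) (y : Fin n) : ℝ :=
  (Orb part y).inf' (Orb_nonempty part y)
    (fun x => (Orb part y).inf' (Orb_nonempty part y) (fun z => (P ^ s) x z))

lemma dlt_le {s : ℕ} {x z y : Fin n} (hx : x ∈ Orb part y) (hz : z ∈ Orb part y) :
    dlt P part s y ≤ (P ^ s) x z := by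
  unfold dlt
  exact le_trans (Finset.inf'_le _ hx) (Finset.inf'_le _ hz)

lemma dlt_pos {s : ℕ} (hPs : ∀ x z, part x = part z → 0 < (P ^ s) x z) (y : Fin n) :
    0 < dlt P part s y := by
  unfold dlt
  refine (Finset.lt_inf'_iff _).2 fun x hx => (Finset.lt_inf'_iff _).2 fun z hz => ?_
  exact hPs x z ((mem_Orb.1 hx).trans (mem_Orb.1 hz).symm)

variable (hP0 : ∀ x y, 0 ≤ P x y)
  (hPblock : ∀ x y, part x ≠ part y → P x y = 0)
  (hProw : ∀ x, ∑ y, P x y = 1)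

include hP0 hPblock hProw

omit hP0 in
lemma card_dlt_le_one (s : ℕ) (y : Fin n) :
    (Orb part y).card * dlt P part s y ≤ 1 := by
  have h := pow_row_orb P part hPblock hProw s y
  calc ((Orb part y).card : ℝ) * dlt P part s y
      = ∑ z ∈ Orb part y, dlt P part s y := by
        rw [Finset.sum_const, nsmul_eq_mul]
    _ ≤ ∑ z ∈ Orb part y, (P ^ s) y z :=
        Finset.sum_le_sum fun z hz => dlt_le P part (self_mem_Orb part y) hz
    _ = 1 := h

omit hP0 in
lemma contract (s t : ℕ) (y : Fin n) :
    Mt P part (s + t) y - mt P part (s + t) y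
      ≤ (1 - (Orb part y).card * dlt P part s y) * (Mt P part t y - mt P part t y) := by
  obtain ⟨x, hx, hMx⟩ := Finset.exists_mem_eq_sup' (Orb_nonempty part y)
    (fun x => (P ^ (s + t)) x y)
  obtain ⟨x', hx', hmx⟩ := Finset.exists_mem_eq_inf' (Orb_nonempty part y)
    (fun x => (P ^ (s + t)) x y)
  have hMtmt := mt_le_Mt P part t y
  set O := Orb part y with hO
  set M := Mt P part t y
  set m := mt P part t y
  set a : Fin n → ℝ := fun z => (P ^ s) x z with ha
  set b : Fin n → ℝ := fun z => (P ^ s) x' z with hb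
  have hsa : ∑ z ∈ O, a z = 1 := by
    rw [ha, hO, ← Orb_congr (mem_Orb.1 hx)]; exact pow_row_orb P part hPblock hProw s x
  have hsb : ∑ z ∈ O, b z = 1 := by
    rw [hb, hO, ← Orb_congr (mem_Orb.1 hx')]; exact pow_row_orb P part hPblock hProw s x'
  have key : Mt P part (s + t) y - mt P part (s + t) y
      = ∑ z ∈ O, (a z - b z) * (P ^ t) z y := by
    rw [show Mt P part (s+t) y = (P ^ (s+t)) x y from hMx,
        show mt P part (s+t) y = (P ^ (s+t)) x' y from hmx,
        pow_add_orb P part hPblock s t x y, pow_add_orb P part hPblock s t x' y,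
        ← Finset.sum_sub_distrib]
    exact Finset.sum_congr rfl fun z _ => (sub_mul _ _ _).symm
  rw [key]
  -- pointwise bound
  have point : ∀ z ∈ O, (a z - b z) * (P ^ t) z y
      ≤ max (a z - b z) 0 * M - max (b z - a z) 0 * m := by
    intro z hz
    have hc1 : (P ^ t) z y ≤ M := le_Mt P part hz
    have hc2 : m ≤ (P ^ t) z y := mt_le P part hz
    rcases le_total (a z) (b z) with h | h
    · rw [max_eq_right (by linarith), max_eq_left (by linarith), zero_mul, zero_sub]
      have : (b z - a z) * m ≤ (b z - a z) * (P ^ t) z y :=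
        mul_le_mul_of_nonneg_left hc2 (by linarith)
      nlinarith
    · rw [max_eq_left (by linarith), max_eq_right (by linarith), zero_mul, sub_zero]
      exact mul_le_mul_of_nonneg_left hc1 (by linarith)
  have hS : ∑ z ∈ O, max (a z - b z) 0 = ∑ z ∈ O, max (b z - a z) 0 := by
    have : ∑ z ∈ O, (max (a z - b z) 0 - max (b z - a z) 0) = ∑ z ∈ O, (a z - b z) := by
      refine Finset.sum_congr rfl fun z _ => ?_
      rcases le_total (a z) (b z) with h | h
      · rw [max_eq_right (by linarith), max_eq_left (by linarith)]; ring
      · rw [max_eq_left (by linarith), max_eq_right (by linarith)]; ring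
    rw [Finset.sum_sub_distrib] at this
    rw [Finset.sum_sub_distrib, hsa, hsb] at this
    linarith
  set S := ∑ z ∈ O, max (a z - b z) 0 with hSdef
  have hSbound : S ≤ 1 - (Orb part y).card * dlt P part s y := by
    have hmin : ∀ z ∈ O, max (a z - b z) 0 = a z - min (a z) (b z) := by
      intro z hz
      rcases le_total (a z) (b z) with h | h
      · rw [max_eq_right (by linarith), min_eq_left h]; ring
      · rw [max_eq_left (by linarith), min_eq_right h]
        try ring
    have hdl : ∀ z ∈ O, dlt P part s y ≤ min (a z) (b z) := by
      intro z hz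
      exact le_min (dlt_le P part hx hz) (dlt_le P part hx' hz)
    calc S = ∑ z ∈ O, (a z - min (a z) (b z)) := Finset.sum_congr rfl hmin
      _ = 1 - ∑ z ∈ O, min (a z) (b z) := by rw [Finset.sum_sub_distrib, hsa]
      _ ≤ 1 - ∑ z ∈ O, dlt P part s y := by
          have := Finset.sum_le_sum hdl
          linarith
      _ = 1 - (Orb part y).card * dlt P part s y := by
          rw [Finset.sum_const, nsmul_eq_mul]
  calc ∑ z ∈ O, (a z - b z) * (P ^ t) z y
      ≤ ∑ z ∈ O, (max (a z - b z) 0 * M - max (b z - a z) 0 * m) :=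
        Finset.sum_le_sum point
    _ = S * M - S * m := by
        rw [Finset.sum_sub_distrib, ← Finset.sum_mul, ← Finset.sum_mul, ← hS]
    _ = (M - m) * S := by ring
    _ ≤ (M - m) * (1 - (Orb part y).card * dlt P part s y) :=
        mul_le_mul_of_nonneg_left hSbound (by linarith)
    _ = (1 - (Orb part y).card * dlt P part s y) * (M - m) := by ring

end Core3

section Core4

variable (P : Matrix (Fin n) (Fin n) ℝ) (part : Fin n → Fin k) (π : Fin n → ℝ)

lemma statPow (hrev : ∀ x y, π x * P x y = π y * P y x) (hProw : ∀ x, ∑ y, P x y = 1) :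
    ∀ (t : ℕ) (y : Fin n), ∑ x, π x * (P ^ t) x y = π y := by
  have stat1 : ∀ y, ∑ x, π x * P x y = π y := by
    intro y
    calc ∑ x, π x * P x y = ∑ x, π y * P y x := Finset.sum_congr rfl fun x _ => hrev x y
      _ = π y * ∑ x, P y x := by rw [Finset.mul_sum]
      _ = π y := by rw [hProw, mul_one]
  intro t
  induction t with
  | zero =>
      intro y
      rw [pow_zero, Finset.sum_eq_single y (fun z _ hz => by simp [Matrix.one_apply, hz])
        (by simp)]
      simp
  | succ t ih =>
      intro y
      have expand : ∀ x, (P ^ (t + 1)) x y = ∑ z, (P ^ t) x z * P z y := by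
        intro x; rw [pow_succ, Matrix.mul_apply]
      calc ∑ x, π x * (P ^ (t+1)) x y
          = ∑ x, ∑ z, π x * ((P ^ t) x z * P z y) := by
            refine Finset.sum_congr rfl fun x _ => ?_
            rw [expand, Finset.mul_sum]
        _ = ∑ z, (∑ x, π x * (P ^ t) x z) * P z y := by
            rw [Finset.sum_comm]
            refine Finset.sum_congr rfl fun z _ => ?_
            rw [Finset.sum_mul]
            exact Finset.sum_congr rfl fun x _ => by ring
        _ = ∑ z, π z * P z y := Finset.sum_congr rfl fun z _ => by rw [ih]
        _ = π y := stat1 y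

/-- The main abstract convergence theorem. -/
theorem main_conv (hπpos : ∀ x, 0 < π x)
    (hP0 : ∀ x y, 0 ≤ P x y)
    (hPblock : ∀ x y, part x ≠ part y → P x y = 0)
    (hProw : ∀ x, ∑ y, P x y = 1)
    (hrev : ∀ x y, π x * P x y = π y * P y x)
    (s : ℕ) (hs : 0 < s) (hPs : ∀ x z, part x = part z → 0 < (P ^ s) x z) :
    ∀ x y, Tendsto (fun t : ℕ => (P ^ t) x y) atTop (𝓝 (gibbsKer π part x y)) := by
  intro x y
  by_cases hxy : part x = part y
  · -- main case
    have hx : x ∈ Orb part y := mem_Orb.2 hxy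
    set G : ℝ := gibbsKer π part x y with hG
    have hOmass : orbMass π part (part x) = ∑ z ∈ Orb part y, π z := by
      unfold orbMass Orb
      rw [hxy]
    have hmasspos : 0 < ∑ z ∈ Orb part y, π z :=
      Finset.sum_pos (fun z _ => hπpos z) (Orb_nonempty part y)
    have hGval : G = π y / ∑ z ∈ Orb part y, π z := by
      rw [hG]
      show (if part y = part x then π y / orbMass π part (part x) else 0) = _
      rw [if_pos hxy.symm, hOmass]
    -- G lies between mt and Mt
    have hGbetween : ∀ t, mt P part t y ≤ G ∧ G ≤ Mt P part t y := by
      intro t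
      have hstat : ∑ z ∈ Orb part y, π z * (P ^ t) z y = π y := by
        rw [Finset.sum_subset (Finset.subset_univ _), statPow P π hrev hProw t y]
        intro z _ hz
        rw [pow_block P part hPblock t z y (fun h => hz (mem_Orb.2 h)), mul_zero]
      constructor
      · have hle : mt P part t y * ∑ z ∈ Orb part y, π z ≤ π y := by
          calc mt P part t y * ∑ z ∈ Orb part y, π z
              = ∑ z ∈ Orb part y, π z * mt P part t y := by
                rw [Finset.mul_sum]; exact Finset.sum_congr rfl fun z _ => by ring
            _ ≤ ∑ z ∈ Orb part y, π z * (P ^ t) z y :=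
                Finset.sum_le_sum fun z hz =>
                  mul_le_mul_of_nonneg_left (mt_le P part hz) (hπpos z).le
            _ = π y := hstat
        rw [hGval, le_div_iff₀ hmasspos]
        exact hle
      · have hle : π y ≤ Mt P part t y * ∑ z ∈ Orb part y, π z := by
          calc π y = ∑ z ∈ Orb part y, π z * (P ^ t) z y := hstat.symm
            _ ≤ ∑ z ∈ Orb part y, π z * Mt P part t y :=
                Finset.sum_le_sum fun z hz =>
                  mul_le_mul_of_nonneg_left (le_Mt P part hz) (hπpos z).le
            _ = Mt P part t y * ∑ z ∈ Orb part y, π z := by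
                rw [Finset.mul_sum]; exact Finset.sum_congr rfl fun z _ => by ring
        rw [hGval, div_le_iff₀ hmasspos]
        exact hle
    set c : ℝ := 1 - (Orb part y).card * dlt P part s y with hc
    have hc1 : c < 1 := by
      have h1 : 0 < dlt P part s y := dlt_pos P part hPs y
      have h2 : (0:ℝ) < (Orb part y).card := by
        have := Finset.card_pos.2 (Orb_nonempty part y)
        exact_mod_cast this
      rw [hc]; nlinarith
    have hc0 : 0 ≤ c := by
      have := card_dlt_le_one P part hPblock hProw s y
      rw [hc]; linarith
    set D : ℕ → ℝ := fun t => Mt P part t y - mt P part t y with hD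
    have hDanti : Antitone D := Dt_antitone P part hP0 hPblock hProw y
    have hDnonneg : ∀ t, 0 ≤ D t := fun t => sub_nonneg.2 (mt_le_Mt P part t y)
    have hgeom : ∀ j : ℕ, D (s * j) ≤ c ^ j * D 0 := by
      intro j
      induction j with
      | zero => simp
      | succ j ih =>
          have h1 : s * (j + 1) = s + s * j := by ring
          calc D (s * (j+1)) = D (s + s * j) := by rw [h1]
            _ ≤ c * D (s * j) := contract P part hPblock hProw s (s * j) y
            _ ≤ c * (c ^ j * D 0) := mul_le_mul_of_nonneg_left ih hc0
            _ = c ^ (j+1) * D 0 := by ring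
    have hDbound : ∀ t, D t ≤ c ^ (t / s) * D 0 := by
      intro t
      calc D t ≤ D (s * (t / s)) := hDanti (Nat.mul_div_le t s |>.trans_eq (by ring_nf))
        _ ≤ c ^ (t / s) * D 0 := hgeom _
    have hdiv : Tendsto (fun t : ℕ => t / s) atTop atTop := by
      refine tendsto_atTop_atTop.2 fun b => ⟨b * s, fun a ha => ?_⟩
      exact (Nat.le_div_iff_mul_le hs).2 ha
    have hcpow : Tendsto (fun j : ℕ => c ^ j * D 0) atTop (𝓝 0) := by
      have := (tendsto_pow_atTop_nhds_zero_of_lt_one hc0 hc1).mul_const (D 0)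
      simpa using this
    have hboundt : Tendsto (fun t : ℕ => c ^ (t / s) * D 0) atTop (𝓝 0) :=
      hcpow.comp hdiv
    have hzero : Tendsto (fun t : ℕ => (P ^ t) x y - G) atTop (𝓝 0) := by
      refine squeeze_zero_norm (fun t => ?_) hboundt
      have h1 : mt P part t y ≤ (P ^ t) x y := mt_le P part hx
      have h2 : (P ^ t) x y ≤ Mt P part t y := le_Mt P part hx
      obtain ⟨h3, h4⟩ := hGbetween t
      have h5 : |(P ^ t) x y - G| ≤ D t := by
        rw [abs_sub_le_iff]
        constructor <;> [skip; skip] <;> · show _ ≤ Mt P part t y - mt P part t y; linarith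
      exact h5.trans (hDbound t)
    have := hzero.add_const G
    simpa using this
  · -- different orbits
    have hzero : ∀ t : ℕ, (P ^ t) x y = 0 := fun t => pow_block P part hPblock t x y hxy
    have hGzero : gibbsKer π part x y = 0 := by
      show (if part y = part x then π y / orbMass π part (part x) else 0) = 0
      rw [if_neg (fun h => hxy h.symm)]
    rw [hGzero]
    simpa [funext hzero] using (tendsto_const_nhds : Tendsto (fun _ : ℕ => (0:ℝ)) atTop (𝓝 0))

end Core4

section Gen

variable (part : Fin n → Fin k)

/-- off-diagonal orbit mates of `x`. -/
def FoS (x : Fin n) : Finset (Fin n) :=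
  Finset.univ.filter (fun z => z ≠ x ∧ part z = part x)

lemma mem_FoS {x z : Fin n} : z ∈ FoS part x ↔ z ≠ x ∧ part z = part x := by
  simp [FoS]

lemma FoS_eq (x : Fin n) : FoS part x = (Orb part x).erase x := by
  ext z; simp [FoS, Orb, Finset.mem_erase]

lemma orbCard_eq (x : Fin n) : orbCard part (part x) = (Orb part x).card := rfl

lemma one_le_orbCard (x : Fin n) : 1 ≤ orbCard part (part x) := by
  rw [orbCard_eq]
  exact Finset.card_pos.2 (Orb_nonempty part x)

lemma card_FoS (x : Fin n) : (FoS part x).card = orbCard part (part x) - 1 := by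
  rw [FoS_eq, Finset.card_erase_of_mem (self_mem_Orb part x), orbCard_eq]

lemma two_le_orbCard {x z : Fin n} (hz : z ∈ FoS part x) : 2 ≤ orbCard part (part x) := by
  obtain ⟨hzx, hzp⟩ := (mem_FoS _).1 hz
  rw [orbCard_eq]
  calc 2 = ({z, x} : Finset (Fin n)).card := (Finset.card_pair hzx).symm
    _ ≤ (Orb part x).card := Finset.card_le_card (by
        intro w hw
        rcases Finset.mem_insert.1 hw with h | h
        · rw [h]; exact mem_Orb.2 hzp
        · rw [Finset.mem_singleton.1 h]; exact self_mem_Orb part x)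

lemma cast_card_FoS (x : Fin n) :
    ((FoS part x).card : ℝ) = (orbCard part (part x) : ℝ) - 1 := by
  rw [card_FoS, Nat.cast_sub (one_le_orbCard part x), Nat.cast_one]

lemma cpos {x z : Fin n} (hz : z ∈ FoS part x) : (0:ℝ) < (orbCard part (part x) : ℝ) - 1 := by
  have := two_le_orbCard part hz
  have : (2:ℝ) ≤ (orbCard part (part x) : ℝ) := by exact_mod_cast this
  linarith

variable (q : Fin n → Fin n → ℝ)

/-- generic Metropolis-type kernel. -/
noncomputable def genKer : Matrix (Fin n) (Fin n) ℝ :=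
  Matrix.of fun x y =>
    if x = y then
      1 - ∑ z ∈ FoS part x, q x z / ((orbCard part (part x) : ℝ) - 1)
    else if part y = part x then
      q x y / ((orbCard part (part x) : ℝ) - 1)
    else 0

lemma genKer_diag (x : Fin n) :
    genKer part q x x
      = 1 - ∑ z ∈ FoS part x, q x z / ((orbCard part (part x) : ℝ) - 1) := by
  show (if x = x then _ else _) = _
  rw [if_pos rfl]

lemma genKer_off {x y : Fin n} (hxy : x ≠ y) (hp : part y = part x) :
    genKer part q x y = q x y / ((orbCard part (part x) : ℝ) - 1) := by
  show (if x = y then _ else _) = _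
  rw [if_neg hxy, if_pos hp]

lemma genKer_zero {x y : Fin n} (hp : part x ≠ part y) : genKer part q x y = 0 := by
  have hxy : x ≠ y := fun h => hp (by rw [h])
  show (if x = y then _ else _) = _
  rw [if_neg hxy, if_neg (fun h => hp h.symm)]

lemma genKer_sum_le (hq1 : ∀ x z, q x z ≤ 1) (x : Fin n) :
    ∑ z ∈ FoS part x, q x z / ((orbCard part (part x) : ℝ) - 1) ≤ 1 := by
  rcases (FoS part x).eq_empty_or_nonempty with h | h
  · rw [h, Finset.sum_empty]; norm_num
  · obtain ⟨w, hw⟩ := h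
    have hc := cpos part hw
    calc ∑ z ∈ FoS part x, q x z / ((orbCard part (part x) : ℝ) - 1)
        ≤ ∑ z ∈ FoS part x, 1 / ((orbCard part (part x) : ℝ) - 1) :=
          Finset.sum_le_sum fun z _ => div_le_div_of_nonneg_right (hq1 x z) hc.le
      _ = 1 := by
          rw [Finset.sum_const, nsmul_eq_mul, cast_card_FoS]
          field_simp
 
lemma genKer_sum_lt (hq1 : ∀ x z, part z = part x → q x z < 1) (x : Fin n)
    (h : (FoS part x).Nonempty) :
    ∑ z ∈ FoS part x, q x z / ((orbCard part (part x) : ℝ) - 1) < 1 := by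
  obtain ⟨w, hw⟩ := h
  have hc := cpos part hw
  calc ∑ z ∈ FoS part x, q x z / ((orbCard part (part x) : ℝ) - 1)
      < ∑ z ∈ FoS part x, 1 / ((orbCard part (part x) : ℝ) - 1) :=
        Finset.sum_lt_sum_of_nonempty ⟨w, hw⟩ fun z hz =>
          (div_lt_div_iff_of_pos_right hc).2 (hq1 x z (((mem_FoS _).1 hz).2))
    _ = 1 := by
        rw [Finset.sum_const, nsmul_eq_mul, cast_card_FoS]
        field_simp

lemma genKer_nonneg (hq0 : ∀ x z, part z = part x → 0 ≤ q x z) (hq1 : ∀ x z, q x z ≤ 1)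
    (x y : Fin n) : 0 ≤ genKer part q x y := by
  by_cases hxy : x = y
  · subst hxy
    rw [genKer_diag]
    have := genKer_sum_le part q hq1 x
    linarith
  · by_cases hp : part y = part x
    · rw [genKer_off part q hxy hp]
      have hy : y ∈ FoS part x := (mem_FoS _).2 ⟨fun h => hxy h.symm, hp⟩
      exact div_nonneg (hq0 x y hp) (cpos part hy).le
    · rw [genKer_zero part q (fun h => hp h.symm)]

lemma genKer_row (x : Fin n) : ∑ y, genKer part q x y = 1 := by
  rw [← Finset.add_sum_erase _ _ (Finset.mem_univ x), genKer_diag]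
  have h1 : ∀ y ∈ Finset.univ.erase x,
      genKer part q x y
        = if part y = part x then q x y / ((orbCard part (part x) : ℝ) - 1) else 0 := by
    intro y hy
    have hxy : x ≠ y := fun h => (Finset.mem_erase.1 hy).1 h.symm
    by_cases hp : part y = part x
    · rw [genKer_off part q hxy hp, if_pos hp]
    · rw [genKer_zero part q (fun h => hp h.symm), if_neg hp]
  rw [Finset.sum_congr rfl h1, Finset.sum_ite]
  have h2 : (Finset.univ.erase x).filter (fun y => part y = part x) = FoS part x := by
    ext z; simp [FoS, Finset.mem_erase, and_comm]
  rw [h2, Finset.sum_const_zero, add_zero]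
  ring

lemma genKer_off_pos (hq0 : ∀ x z, part z = part x → 0 < q x z)
    {x y : Fin n} (hxy : x ≠ y) (hp : part y = part x) : 0 < genKer part q x y := by
  rw [genKer_off part q hxy hp]
  have hy : y ∈ FoS part x := (mem_FoS _).2 ⟨fun h => hxy h.symm, hp⟩
  exact div_pos (hq0 x y hp) (cpos part hy)

lemma genKer_diag_pos (hq1 : ∀ x z, part z = part x → q x z < 1) (x : Fin n) :
    0 < genKer part q x x := by
  rw [genKer_diag]
  rcases (FoS part x).eq_empty_or_nonempty with h | h
  · rw [h, Finset.sum_empty]; norm_num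
  · have := genKer_sum_lt part q hq1 x h
    linarith

lemma genKer_rev (π : Fin n → ℝ)
    (hbal : ∀ x y, part y = part x → π x * q x y = π y * q y x) (x y : Fin n) :
    π x * genKer part q x y = π y * genKer part q y x := by
  by_cases hxy : x = y
  · rw [hxy]
  · by_cases hp : part y = part x
    · rw [genKer_off part q hxy hp, genKer_off part q (Ne.symm hxy) hp.symm]
      have hcard : orbCard part (part x) = orbCard part (part y) := by rw [hp]
      rw [hcard, ← mul_div_assoc, ← mul_div_assoc, hbal x y hp]
    · rw [genKer_zero part q (fun h => hp h.symm), genKer_zero part q hp]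
      simp

end Gen

section Kernels

variable (π : Fin n → ℝ) (part : Fin n → Fin k)

lemma barker_eq : barkerKer π part = genKer part (fun x z => π z / (π x + π z)) := rfl

lemma mh_eq : mhKer π part = genKer part (fun x z => min 1 (π z / π x)) := rfl

variable (hπpos : ∀ x, 0 < π x)

include hπpos

lemma barker_q_pos : ∀ x z : Fin n, part z = part x → 0 < π z / (π x + π z) :=
  fun x z _ => div_pos (hπpos z) (by have := hπpos x; have := hπpos z; linarith)

lemma barker_q_lt : ∀ x z : Fin n, part z = part x → π z / (π x + π z) < 1 := by
  intro x z _
  rw [div_lt_one (by have := hπpos x; have := hπpos z; linarith)]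
  have := hπpos x; linarith

omit hπpos in
lemma barker_bal : ∀ x y : Fin n, part y = part x →
    π x * (π y / (π x + π y)) = π y * (π x / (π y + π x)) := by
  intro x y _
  rw [add_comm (π y) (π x)]
  ring

lemma mh_q_pos : ∀ x z : Fin n, part z = part x → 0 < min 1 (π z / π x) :=
  fun x z _ => lt_min one_pos (div_pos (hπpos z) (hπpos x))

omit hπpos in
lemma mh_q_le : ∀ x z : Fin n, min 1 (π z / π x) ≤ 1 := fun _ _ => min_le_left _ _

lemma mh_bal : ∀ x y : Fin n, part y = part x →
    π x * min 1 (π y / π x) = π y * min 1 (π x / π y) := by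
  intro x y _
  have hx := hπpos x
  have hy := hπpos y
  have h1 : min 1 (π y / π x) = min (π x) (π y) / π x := by
    rw [← div_self hx.ne', min_div_div_right hx.le]
  have h2 : min 1 (π x / π y) = min (π y) (π x) / π y := by
    rw [← div_self hy.ne', min_div_div_right hy.le]
  rw [h1, h2, mul_div_cancel₀ _ hx.ne', mul_div_cancel₀ _ hy.ne', min_comm]

/-- one-step positivity within orbits for the Barker kernel. -/
lemma barker_pos : ∀ x z : Fin n, part x = part z → 0 < barkerKer π part x z := by
  intro x z hp
  rw [barker_eq]
  by_cases hxz : x = z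
  · subst hxz
    exact genKer_diag_pos part _ (fun x z hz => barker_q_lt π part hπpos x z hz) x
  · exact genKer_off_pos part _ (fun x z hz => barker_q_pos π part hπpos x z hz) hxz hp.symm

omit hπpos in
lemma sq_ge_single (P : Matrix (Fin n) (Fin n) ℝ) (hP0 : ∀ x y, 0 ≤ P x y) (x z y : Fin n) :
    P x z * P z y ≤ (P ^ 2) x y := by
  rw [pow_two, Matrix.mul_apply]
  exact Finset.single_le_sum (f := fun w => P x w * P w y)
    (fun w _ => mul_nonneg (hP0 x w) (hP0 w y)) (Finset.mem_univ z)

/-- two-step positivity within orbits for the MH kernel, assuming no 2-cycles. -/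
lemma mh_sq_pos
    (hMH : ¬ ∃ x y : Fin n, x ≠ y ∧ part x = part y ∧ orbCard part (part x) = 2 ∧ π x = π y) :
    ∀ x y : Fin n, part x = part y → 0 < (mhKer π part ^ 2) x y := by
  have hq0 := mh_q_pos π part hπpos
  have hq0' : ∀ x z, part z = part x → 0 ≤ min 1 (π z / π x) := fun x z h => (hq0 x z h).le
  have hq1 := mh_q_le π
  set M := mhKer π part with hM
  have hM0 : ∀ x y, 0 ≤ M x y := by
    rw [hM, mh_eq]; exact genKer_nonneg part _ hq0' hq1
  have off_pos : ∀ {x y : Fin n}, x ≠ y → part y = part x → 0 < M x y := by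
    intro x y hxy hp
    rw [hM, mh_eq]
    exact genKer_off_pos part _ hq0 hxy hp
  intro x y hp
  by_cases hxy : x = y
  · -- diagonal of M²
    subst hxy
    rcases (FoS part x).eq_empty_or_nonempty with h | ⟨w, hw⟩
    · have hdiag : M x x = 1 := by
        rw [hM, mh_eq, genKer_diag, h, Finset.sum_empty, sub_zero]
      calc (0:ℝ) < 1 * 1 := by norm_num
        _ = M x x * M x x := by rw [hdiag]
        _ ≤ (M ^ 2) x x := sq_ge_single M hM0 x x x
    · obtain ⟨hwx, hwp⟩ := (mem_FoS _).1 hw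
      have h1 : 0 < M x w := off_pos (Ne.symm hwx) hwp
      have h2 : 0 < M w x := off_pos hwx hwp.symm
      calc (0:ℝ) < M x w * M w x := mul_pos h1 h2
        _ ≤ (M ^ 2) x x := sq_ge_single M hM0 x w x
  · -- off-diagonal
    have hyF : y ∈ FoS part x := (mem_FoS _).2 ⟨Ne.symm hxy, hp.symm⟩
    have hN2 : 2 ≤ orbCard part (part x) := two_le_orbCard part hyF
    by_cases h3 : 3 ≤ orbCard part (part x)
    · -- a third state exists
      have hcard : 1 ≤ ((Orb part x) \ {x, y}).card := by
        have h1 := Finset.le_card_sdiff ({x, y} : Finset (Fin n)) (Orb part x)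
        have h2 : ({x, y} : Finset (Fin n)).card = 2 := Finset.card_pair hxy
        rw [← orbCard_eq] at h1
        omega
      obtain ⟨z, hz⟩ := Finset.card_pos.1 (by omega : 0 < ((Orb part x) \ {x, y}).card)
      obtain ⟨hzO, hznot⟩ := Finset.mem_sdiff.1 hz
      have hzx : z ≠ x := fun h => hznot (by simp [h])
      have hzy : z ≠ y := fun h => hznot (by simp [h])
      have hzp : part z = part x := mem_Orb.1 hzO
      have h1 : 0 < M x z := off_pos (Ne.symm hzx) hzp
      have h2 : 0 < M z y := off_pos hzy (by rw [hp.symm, ← hzp])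
      calc (0:ℝ) < M x z * M z y := mul_pos h1 h2
        _ ≤ (M ^ 2) x y := sq_ge_single M hM0 x z y
    · -- orbit has exactly two elements
      have hN : orbCard part (part x) = 2 := by omega
      have hpi : π x ≠ π y := fun h => hMH ⟨x, y, hxy, hp, hN, h⟩
      have hOrb : Orb part x = {x, y} := by
        refine (Finset.eq_of_subset_of_card_le ?_ ?_).symm
        · intro w hw
          rcases Finset.mem_insert.1 hw with h | h
          · rw [h]; exact self_mem_Orb part x
          · rw [Finset.mem_singleton.1 h]; exact mem_Orb.2 hp.symm
        · rw [← orbCard_eq, hN, Finset.card_pair hxy]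
      have hFx : FoS part x = {y} := by
        rw [FoS_eq, hOrb, Finset.erase_insert (Finset.notMem_singleton.2 hxy)]
      have hFy : FoS part y = {x} := by
        rw [FoS_eq, ← Orb_congr hp, hOrb, Finset.pair_comm,
          Finset.erase_insert (Finset.notMem_singleton.2 (Ne.symm hxy))]
      have hNy : orbCard part (part y) = 2 := by rw [← hp, hN]
      have hMxy : 0 < M x y := off_pos hxy hp.symm
      have hMxx : M x x = 1 - min 1 (π y / π x) := by
        rw [hM, mh_eq, genKer_diag, hFx, Finset.sum_singleton, hN]
        norm_num
      have hMyy : M y y = 1 - min 1 (π x / π y) := by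
        rw [hM, mh_eq, genKer_diag, hFy, Finset.sum_singleton, hNy]
        norm_num
      rcases lt_or_gt_of_ne hpi with h | h
      · -- π x < π y : use path x → y → y
        have : min 1 (π x / π y) = π x / π y :=
          min_eq_right ((div_le_one (hπpos y)).2 h.le)
        have hyy : 0 < M y y := by
          rw [hMyy, this]
          have : π x / π y < 1 := (div_lt_one (hπpos y)).2 h
          linarith
        calc (0:ℝ) < M x y * M y y := mul_pos hMxy hyy
          _ ≤ (M ^ 2) x y := sq_ge_single M hM0 x y y
      · -- π y < π x : use path x → x → y
        have : min 1 (π y / π x) = π y / π x :=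
          min_eq_right ((div_le_one (hπpos x)).2 h.le)
        have hxx : 0 < M x x := by
          rw [hMxx, this]
          have : π y / π x < 1 := (div_lt_one (hπpos x)).2 h
          linarith
        calc (0:ℝ) < M x x * M x y := mul_pos hxx hMxy
          _ ≤ (M ^ 2) x y := sq_ge_single M hM0 x x y

end Kernels

end Stmt0Aux

/-- `B^t → G` entrywise, and if no orbit is a two-element set of equal
`π`-masses (no deterministic 2-cycle for `M`), then also `M^t → G` entrywise. -/
theorem stmt0 {n k : ℕ} (hn : 0 < n)
    (π : Fin n → ℝ) (hπpos : ∀ x, 0 < π x) (hπsum : ∑ x, π x = 1)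
    (part : Fin n → Fin k) (hpart : Function.Surjective part) :
    (∀ x y : Fin n,
      Tendsto (fun t : ℕ => (barkerKer π part ^ t) x y) atTop (𝓝 (gibbsKer π part x y))) ∧
    ((¬ ∃ x y : Fin n, x ≠ y ∧ part x = part y ∧ orbCard part (part x) = 2 ∧ π x = π y) →
      ∀ x y : Fin n,
        Tendsto (fun t : ℕ => (mhKer π part ^ t) x y) atTop (𝓝 (gibbsKer π part x y))) := by
  open Stmt0Aux in
  constructor
  · -- Barker
    have hq0 : ∀ x z : Fin n, part z = part x → 0 < π z / (π x + π z) :=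
      barker_q_pos π part hπpos
    have hq0' : ∀ x z : Fin n, part z = part x → 0 ≤ π z / (π x + π z) :=
      fun x z h => (hq0 x z h).le
    have hq1 : ∀ x z : Fin n, π z / (π x + π z) ≤ 1 := by
      intro x z
      rw [div_le_one (by have := hπpos x; have := hπpos z; linarith)]
      have := hπpos x; linarith
    refine main_conv (barkerKer π part) part π hπpos ?_ ?_ ?_ ?_ 1 one_pos ?_
    · exact genKer_nonneg part _ hq0' hq1
    · intro x y h
      exact genKer_zero part _ h
    · exact genKer_row part _
    · exact genKer_rev part _ π (barker_bal π part)
    · intro x z h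
      rw [pow_one]
      exact barker_pos π part hπpos x z h
  · -- Metropolis–Hastings
    intro hMH
    have hq0 := mh_q_pos π part hπpos
    have hq0' : ∀ x z : Fin n, part z = part x → 0 ≤ min 1 (π z / π x) :=
      fun x z h => (hq0 x z h).le
    have hq1 := mh_q_le (n := n) π
    refine main_conv (mhKer π part) part π hπpos ?_ ?_ ?_ ?_ 2 two_pos ?_
    · exact genKer_nonneg part _ hq0' hq1
    · intro x y h
      exact genKer_zero part _ h
    · exact genKer_row part _
    · exact genKer_rev part _ π (mh_bal π part hπpos)
    · exact mh_sq_pos π part hπpos hMH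
end

section
/- For any π-stationary stochastic matrix P, the projection chains of GPG and of P induced by the orbit partition coincide: for all i, j ∈ {1,…,k}, (1/π(O_i)) Σ_{x∈O_i} Σ_{y∈O_j} π(x)·(GPG)(x,y) = (1/π(O_i)) Σ_{x∈O_i} Σ_{y∈O_j} π(x)·P(x,y). -/
open Matrix Finset

/-- the projection chains of `GPG` and of `P` induced by the orbit
partition coincide. -/
theorem stmt1 {n k : ℕ} (hn : 0 < n)
    (π : Fin n → ℝ) (hπpos : ∀ x, 0 < π x) (hπsum : ∑ x, π x = 1)
    (part : Fin n → Fin k) (hpart : Function.Surjective part)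
    (P : Matrix (Fin n) (Fin n) ℝ)
    (hPnonneg : ∀ x y, 0 ≤ P x y) (hProw : ∀ x, ∑ y, P x y = 1)
    (hPstat : ∀ y, ∑ x, π x * P x y = π y) :
    ∀ i j : Fin k,
      (1 / orbMass π part i) *
          ∑ x ∈ Finset.univ.filter (fun x => part x = i),
            ∑ y ∈ Finset.univ.filter (fun y => part y = j),
              π x * (gibbsKer π part * P * gibbsKer π part) x y
        = (1 / orbMass π part i) *
            ∑ x ∈ Finset.univ.filter (fun x => part x = i),
              ∑ y ∈ Finset.univ.filter (fun y => part y = j), π x * P x y := by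
  intro i j
  have hm : ∀ l : Fin k, 0 < orbMass π part l := by
    intro l
    obtain ⟨z, hz⟩ := hpart l
    exact Finset.sum_pos (fun w _ => hπpos w) ⟨z, by simp [hz]⟩
  congr 1
  set G := gibbsKer π part with hG
  set M := G * P with hM
  -- Lemma B: summing a row of G over an orbit gives an indicator
  have hB : ∀ (l : Fin k) (v : Fin n),
      ∑ y ∈ Finset.univ.filter (fun y => part y = l), G v y
        = if part v = l then 1 else 0 := by
    intro l v
    by_cases h : part v = l
    · rw [if_pos h]
      have : ∀ y ∈ Finset.univ.filter (fun y => part y = l),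
          G v y = π y / orbMass π part l := by
        intro y hy
        simp only [Finset.mem_filter] at hy
        simp [G, gibbsKer, hy.2, h]
      rw [Finset.sum_congr rfl this, ← Finset.sum_div]
      exact div_self (hm l).ne'
    · rw [if_neg h]
      apply Finset.sum_eq_zero
      intro y hy
      simp only [Finset.mem_filter] at hy
      have : part y ≠ part v := by rw [hy.2]; exact fun hc => h hc.symm
      simp [G, gibbsKer, this]
  -- Lemma A: summing π x * G x u over an orbit gives π u · indicator
  have hA : ∀ (l : Fin k) (u : Fin n),
      ∑ x ∈ Finset.univ.filter (fun x => part x = l), π x * G x u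
        = if part u = l then π u else 0 := by
    intro l u
    by_cases h : part u = l
    · rw [if_pos h]
      have : ∀ x ∈ Finset.univ.filter (fun x => part x = l),
          π x * G x u = π x * (π u / orbMass π part l) := by
        intro x hx
        simp only [Finset.mem_filter] at hx
        simp [G, gibbsKer, hx.2, h]
      rw [Finset.sum_congr rfl this, ← Finset.sum_mul]
      have := (hm l).ne'
      rw [show (∑ x ∈ Finset.univ.filter (fun x => part x = l), π x) = orbMass π part l
        from rfl]
      field_simp
    · rw [if_neg h]
      apply Finset.sum_eq_zero
      intro x hx
      simp only [Finset.mem_filter] at hx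
      have : part u ≠ part x := by rw [hx.2]; exact h
      simp [G, gibbsKer, this]
  -- Step 1: absorb the right factor G
  have step1 : ∀ x : Fin n,
      ∑ y ∈ Finset.univ.filter (fun y => part y = j), π x * (M * G) x y
        = ∑ v ∈ Finset.univ.filter (fun v => part v = j), π x * M x v := by
    intro x
    calc ∑ y ∈ Finset.univ.filter (fun y => part y = j), π x * (M * G) x y
        = ∑ y ∈ Finset.univ.filter (fun y => part y = j), ∑ v, (π x * M x v) * G v y := by
          simp only [Matrix.mul_apply, Finset.mul_sum, mul_assoc]
      _ = ∑ v, ∑ y ∈ Finset.univ.filter (fun y => part y = j), (π x * M x v) * G v y :=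
          Finset.sum_comm
      _ = ∑ v, (π x * M x v) * (if part v = j then 1 else 0) := by
          refine Finset.sum_congr rfl fun v _ => ?_
          rw [← Finset.mul_sum, hB j v]
      _ = ∑ v, if part v = j then π x * M x v else 0 := by
          refine Finset.sum_congr rfl fun v _ => ?_
          split <;> simp
      _ = ∑ v ∈ Finset.univ.filter (fun v => part v = j), π x * M x v := by
          rw [Finset.sum_filter]
  -- Step 2: absorb the left factor G
  have step2 : ∀ v : Fin n,
      ∑ x ∈ Finset.univ.filter (fun x => part x = i), π x * M x v
        = ∑ u ∈ Finset.univ.filter (fun u => part u = i), π u * P u v := by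
    intro v
    calc ∑ x ∈ Finset.univ.filter (fun x => part x = i), π x * M x v
        = ∑ x ∈ Finset.univ.filter (fun x => part x = i), ∑ u, (π x * G x u) * P u v := by
          refine Finset.sum_congr rfl fun x _ => ?_
          simp only [hM, Matrix.mul_apply, Finset.mul_sum, mul_assoc]
      _ = ∑ u, ∑ x ∈ Finset.univ.filter (fun x => part x = i), (π x * G x u) * P u v :=
          Finset.sum_comm
      _ = ∑ u, (if part u = i then π u else 0) * P u v := by
          refine Finset.sum_congr rfl fun u _ => ?_
          rw [← Finset.sum_mul, hA i u]
      _ = ∑ u, if part u = i then π u * P u v else 0 := by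
          refine Finset.sum_congr rfl fun u _ => ?_
          split <;> simp
      _ = ∑ u ∈ Finset.univ.filter (fun u => part u = i), π u * P u v := by
          rw [Finset.sum_filter]
  calc ∑ x ∈ Finset.univ.filter (fun x => part x = i),
          ∑ y ∈ Finset.univ.filter (fun y => part y = j), π x * (M * G) x y
      = ∑ x ∈ Finset.univ.filter (fun x => part x = i),
          ∑ v ∈ Finset.univ.filter (fun v => part v = j), π x * M x v :=
        Finset.sum_congr rfl fun x _ => step1 x
    _ = ∑ v ∈ Finset.univ.filter (fun v => part v = j),
          ∑ x ∈ Finset.univ.filter (fun x => part x = i), π x * M x v := Finset.sum_comm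
    _ = ∑ v ∈ Finset.univ.filter (fun v => part v = j),
          ∑ u ∈ Finset.univ.filter (fun u => part u = i), π u * P u v :=
        Finset.sum_congr rfl fun v _ => step2 v
    _ = ∑ u ∈ Finset.univ.filter (fun u => part u = i),
          ∑ v ∈ Finset.univ.filter (fun v => part v = j), π u * P u v := Finset.sum_comm
end

section
/- For any π-reversible stochastic matrix P, γ(GPG) ≤ γ(P), where γ(Q) := max over i ∈ {1,…,k} and x ∈ O_i of Σ_{y∉O_i} Q(x,y). -/
open Matrix Finset

/-- `γ(Q)`: the maximum over states `x` of the probability of leaving the orbit of `x`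
in one step of `Q` (equals the max over orbits `i` and `x ∈ O_i`). -/
noncomputable def gam {n k : ℕ} (part : Fin n → Fin k) (Q : Matrix (Fin n) (Fin n) ℝ) : ℝ :=
  ⨆ x : Fin n, ∑ y ∈ Finset.univ.filter (fun y => part y ≠ part x), Q x y

lemma orbMass_pos {n k : ℕ} (π : Fin n → ℝ) (hπpos : ∀ x, 0 < π x)
    (part : Fin n → Fin k) (hpart : Function.Surjective part) (i : Fin k) :
    0 < orbMass π part i := by
  obtain ⟨z, hz⟩ := hpart i
  exact Finset.sum_pos (fun x _ => hπpos x) ⟨z, by simp [hz]⟩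

lemma gibbs_nonneg {n k : ℕ} (π : Fin n → ℝ) (hπpos : ∀ x, 0 < π x)
    (part : Fin n → Fin k) (x y : Fin n) : 0 ≤ gibbsKer π part x y := by
  unfold gibbsKer
  simp only [Matrix.of_apply]
  split
  · apply div_nonneg (hπpos y).le
    exact Finset.sum_nonneg fun z _ => (hπpos z).le
  · exact le_refl 0

lemma gibbs_row_sum {n k : ℕ} (π : Fin n → ℝ) (hπpos : ∀ x, 0 < π x)
    (part : Fin n → Fin k) (hpart : Function.Surjective part) (x : Fin n) :
    ∑ y, gibbsKer π part x y = 1 := by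
  unfold gibbsKer
  simp only [Matrix.of_apply]
  rw [Finset.sum_ite, Finset.sum_const_zero, add_zero, ← Finset.sum_div]
  exact div_self (orbMass_pos π hπpos part hpart (part x)).ne'

/-- `γ(GPG) ≤ γ(P)` for any `π`-reversible stochastic `P`. -/
theorem stmt2 {n k : ℕ} (hn : 0 < n)
    (π : Fin n → ℝ) (hπpos : ∀ x, 0 < π x) (hπsum : ∑ x, π x = 1)
    (part : Fin n → Fin k) (hpart : Function.Surjective part)
    (P : Matrix (Fin n) (Fin n) ℝ)
    (hPnonneg : ∀ x y, 0 ≤ P x y) (hProw : ∀ x, ∑ y, P x y = 1)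
    (hPrev : ∀ x y, π x * P x y = π y * P y x) :
    gam part (gibbsKer π part * P * gibbsKer π part) ≤ gam part P := by
  have hne : Nonempty (Fin n) := ⟨⟨0, hn⟩⟩
  set G := gibbsKer π part with hGdef
  have hG0 : ∀ a b, 0 ≤ G a b := gibbs_nonneg π hπpos part
  have hGrow : ∀ a, ∑ b, G a b = 1 := gibbs_row_sum π hπpos part hpart
  have hbdd : BddAbove (Set.range fun x : Fin n =>
      ∑ y ∈ Finset.univ.filter (fun y => part y ≠ part x), P x y) :=
    (Set.finite_range _).bddAbove
  apply ciSup_le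
  intro x
  have hGsum : ∀ b : Fin n,
      ∑ y ∈ Finset.univ.filter (fun y => part y ≠ part x), G b y
      = if part b = part x then 0 else 1 := by
    intro b
    by_cases hb : part b = part x
    · rw [if_pos hb]
      apply Finset.sum_eq_zero
      intro y hy
      simp only [Finset.mem_filter] at hy
      show gibbsKer π part b y = 0
      unfold gibbsKer
      simp only [Matrix.of_apply]
      rw [if_neg]
      intro h
      exact hy.2 (h.trans hb)
    · rw [if_neg hb]
      have h1 := hGrow b
      rw [← Finset.sum_filter_add_sum_filter_not Finset.univ
        (fun y => part y ≠ part x) (G b)] at h1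
      have h2 : ∑ y ∈ Finset.univ.filter (fun y => ¬ part y ≠ part x), G b y = 0 := by
        apply Finset.sum_eq_zero
        intro y hy
        simp only [Finset.mem_filter, not_not] at hy
        show gibbsKer π part b y = 0
        unfold gibbsKer
        simp only [Matrix.of_apply]
        rw [if_neg]
        rw [hy.2]
        exact fun h => hb h.symm
      linarith
  have key : ∑ y ∈ Finset.univ.filter (fun y => part y ≠ part x), (G * P * G) x y
      = ∑ a, G x a * ∑ b ∈ Finset.univ.filter (fun b => part b ≠ part x), P a b := by
    simp only [Matrix.mul_apply]
    rw [Finset.sum_comm]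
    have step1 : ∀ b : Fin n,
        ∑ y ∈ Finset.univ.filter (fun y => part y ≠ part x),
          (∑ a, G x a * P a b) * G b y
        = (∑ a, G x a * P a b) * (if part b = part x then 0 else 1) := by
      intro b
      rw [← Finset.mul_sum, hGsum b]
    rw [Finset.sum_congr rfl (fun b _ => step1 b)]
    rw [show (∑ b, (∑ a, G x a * P a b) * (if part b = part x then 0 else 1))
        = ∑ b ∈ Finset.univ.filter (fun b => part b ≠ part x), ∑ a, G x a * P a b by
      rw [Finset.sum_filter]
      apply Finset.sum_congr rfl
      intro b _
      by_cases hb : part b = part x <;> simp [hb]]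
    rw [Finset.sum_comm]
    apply Finset.sum_congr rfl
    intro a _
    rw [Finset.mul_sum]
  rw [key]
  have hle : ∀ a : Fin n,
      G x a * ∑ b ∈ Finset.univ.filter (fun b => part b ≠ part x), P a b
      ≤ G x a * gam part P := by
    intro a
    by_cases ha : part a = part x
    · apply mul_le_mul_of_nonneg_left _ (hG0 x a)
      have : ∑ b ∈ Finset.univ.filter (fun b => part b ≠ part x), P a b
          = ∑ b ∈ Finset.univ.filter (fun b => part b ≠ part a), P a b := by
        apply Finset.sum_congr _ (fun _ _ => rfl)
        simp [ha]
      rw [this]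
      exact le_ciSup hbdd a
    · have : G x a = 0 := by
        show gibbsKer π part x a = 0
        unfold gibbsKer
        simp only [Matrix.of_apply]
        rw [if_neg ha]
      simp [this]
  calc ∑ a, G x a * ∑ b ∈ Finset.univ.filter (fun b => part b ≠ part x), P a b
      ≤ ∑ a, G x a * gam part P := Finset.sum_le_sum fun a _ => hle a
    _ = gam part P := by rw [← Finset.sum_mul, hGrow, one_mul]
end

section
/- Let P be a π-stationary stochastic matrix. Fix i ∈ {1,…,k} with block O_i and set ā_i := Σ_{x∈O_i} (π(x)/π(O_i)) Σ_{y∈O_i} P(x,y). Then the restriction chain of GPG on O_i equals (1−ā_i)·I + ā_i·G_i, where I is the identity on O_i and G_i(x,y) := π(y)/π(O_i) for x,y ∈ O_i. Consequently, every eigenvalue of the restriction chain of GPG on O_i is equal to 1 or to 1−ā_i. -/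
open Matrix Finset

/-- The restriction chain of `Q` on the block `O_i`. -/
noncomputable def restr {n k : ℕ} (part : Fin n → Fin k) (i : Fin k)
    (Q : Matrix (Fin n) (Fin n) ℝ) :
    Matrix {x : Fin n // part x = i} {x : Fin n // part x = i} ℝ :=
  Matrix.of fun x y =>
    if (x : Fin n) = (y : Fin n) then
      1 - ∑ z ∈ Finset.univ.filter (fun z : {x : Fin n // part x = i} => z ≠ x),
            Q (x : Fin n) (z : Fin n)
    else Q (x : Fin n) (y : Fin n)

/-- the restriction chain of `GPG` on `O_i` equals
`(1 − ā_i)·I + ā_i·G_i`, and hence each of its eigenvalues is `1` or `1 − ā_i`. -/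
theorem stmt3 {n k : ℕ} (hn : 0 < n)
    (π : Fin n → ℝ) (hπpos : ∀ x, 0 < π x) (hπsum : ∑ x, π x = 1)
    (part : Fin n → Fin k) (hpart : Function.Surjective part)
    (P : Matrix (Fin n) (Fin n) ℝ)
    (hPnonneg : ∀ x y, 0 ≤ P x y) (hProw : ∀ x, ∑ y, P x y = 1)
    (hPstat : ∀ y, ∑ x, π x * P x y = π y)
    (i : Fin k) (abar : ℝ)
    (habar : abar = ∑ x ∈ Finset.univ.filter (fun x => part x = i),
        (π x / orbMass π part i) * ∑ y ∈ Finset.univ.filter (fun y => part y = i), P x y) :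
    restr part i (gibbsKer π part * P * gibbsKer π part)
        = (1 - abar) • (1 : Matrix {x : Fin n // part x = i} {x : Fin n // part x = i} ℝ)
          + abar • (Matrix.of fun _ y : {x : Fin n // part x = i} =>
              π (y : Fin n) / orbMass π part i) ∧
      ∀ μ ∈ spectrum ℝ (restr part i (gibbsKer π part * P * gibbsKer π part)),
        μ = 1 ∨ μ = 1 - abar := by
  classical
  set m := orbMass π part i with hm
  have hm0 : 0 < m := by
    obtain ⟨x0, hx0⟩ := hpart i
    rw [hm, orbMass]
    exact Finset.sum_pos (fun z _ => hπpos z)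
      ⟨x0, Finset.mem_filter.mpr ⟨Finset.mem_univ _, hx0⟩⟩
  have hsum : ∑ z : {x : Fin n // part x = i}, π (z : Fin n) = m := by
    rw [hm, orbMass]
    exact (Finset.sum_subtype (s := Finset.univ.filter (fun z => part z = i)) (fun x => by simp) π).symm
  have key : ∀ x y : Fin n, part x = i → part y = i →
      (gibbsKer π part * P * gibbsKer π part) x y = abar * (π y / m) := by
    intro x y hx hy
    have h1 : ∀ v : Fin n, (gibbsKer π part * P) x v
        = ∑ u ∈ Finset.univ.filter (fun u => part u = i), (π u / m) * P u v := by
      intro v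
      rw [Matrix.mul_apply, Finset.sum_filter]
      apply Finset.sum_congr rfl
      intro u _
      simp only [gibbsKer, Matrix.of_apply, hx]
      by_cases hu : part u = i
      · rw [if_pos hu, if_pos hu, ← hm]
      · rw [if_neg hu, if_neg hu, zero_mul]
    rw [Matrix.mul_apply]
    have h2 : ∀ v : Fin n, (gibbsKer π part * P) x v * gibbsKer π part v y
        = if part v = i then
            (∑ u ∈ Finset.univ.filter (fun u => part u = i), (π u / m) * P u v) * (π y / m)
          else 0 := by
      intro v
      rw [h1]
      simp only [gibbsKer, Matrix.of_apply]
      by_cases hv : part v = i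
      · rw [if_pos (hy.trans hv.symm : part y = part v), if_pos hv, hv, ← hm]
      · rw [if_neg (fun h => hv (h.symm.trans hy)), if_neg hv, mul_zero]
    rw [Finset.sum_congr rfl (fun v _ => h2 v), ← Finset.sum_filter, ← Finset.sum_mul]
    have habar' : abar = ∑ v ∈ Finset.univ.filter (fun v => part v = i),
        ∑ u ∈ Finset.univ.filter (fun u => part u = i), (π u / m) * P u v := by
      rw [habar]
      simp_rw [Finset.mul_sum]
      exact Finset.sum_comm
    rw [← habar']
  have hEq : restr part i (gibbsKer π part * P * gibbsKer π part)
      = (1 - abar) • (1 : Matrix {x : Fin n // part x = i} {x : Fin n // part x = i} ℝ)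
        + abar • (Matrix.of fun _ y : {x : Fin n // part x = i} =>
            π (y : Fin n) / m) := by
    ext x y
    simp only [restr, Matrix.of_apply, Matrix.add_apply, Matrix.smul_apply, smul_eq_mul]
    by_cases hxy : (x : Fin n) = (y : Fin n)
    · have hxy' : x = y := Subtype.ext hxy
      subst hxy'
      rw [if_pos rfl, Matrix.one_apply_eq]
      have hz : ∑ z ∈ Finset.univ.filter (fun z : {x : Fin n // part x = i} => z ≠ x),
          (gibbsKer π part * P * gibbsKer π part) (x : Fin n) (z : Fin n)
          = abar - abar * (π (x : Fin n) / m) := by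
        have h4 : ∀ z ∈ Finset.univ.filter (fun z : {x : Fin n // part x = i} => z ≠ x),
            (gibbsKer π part * P * gibbsKer π part) (x : Fin n) (z : Fin n)
              = abar * (π (z : Fin n) / m) := fun z _ => key x z x.prop z.prop
        rw [Finset.sum_congr rfl h4]
        rw [Finset.filter_ne', Finset.sum_erase_eq_sub (Finset.mem_univ x)]
        have h3 : ∑ z : {x : Fin n // part x = i}, abar * (π (z : Fin n) / m) = abar := by
          rw [← Finset.mul_sum, ← Finset.sum_div, hsum, div_self hm0.ne', mul_one]
        rw [h3]
      rw [hz]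
      ring
    · have hxy' : x ≠ y := fun h => hxy (congrArg _ h)
      rw [if_neg hxy, Matrix.one_apply_ne hxy', key _ _ x.prop y.prop]
      ring
  refine ⟨hEq, ?_⟩
  intro μ hμ
  by_contra hc
  push_neg at hc
  obtain ⟨h1, h2⟩ := hc
  rw [hEq, spectrum.mem_iff] at hμ
  apply hμ
  set Gm : Matrix {x : Fin n // part x = i} {x : Fin n // part x = i} ℝ :=
    Matrix.of fun _ y : {x : Fin n // part x = i} => π (y : Fin n) / m with hGm
  have hGG : Gm * Gm = Gm := by
    ext x y
    rw [Matrix.mul_apply]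
    simp only [hGm, Matrix.of_apply]
    rw [← Finset.sum_mul, ← Finset.sum_div, hsum, div_self hm0.ne', one_mul]
  have hp : (μ - 1) * (μ - (1 - abar)) ≠ 0 :=
    mul_ne_zero (sub_ne_zero.mpr h1) (sub_ne_zero.mpr h2)
  rw [isUnit_iff_exists]
  rw [Algebra.algebraMap_eq_smul_one]
  set M := μ • (1 : Matrix {x : Fin n // part x = i} {x : Fin n // part x = i} ℝ)
      - ((1 - abar) • 1 + abar • Gm) with hM
  set B := (μ - 1) • (1 : Matrix {x : Fin n // part x = i} {x : Fin n // part x = i} ℝ)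
      + abar • Gm with hB
  have hMB : M * B = ((μ - 1) * (μ - (1 - abar))) • 1 := by
    rw [hM, hB]
    simp only [sub_mul, add_mul, mul_add, Matrix.smul_mul, Matrix.mul_smul,
      Matrix.one_mul, Matrix.mul_one, hGG, smul_smul]
    module
  have hBM : B * M = ((μ - 1) * (μ - (1 - abar))) • 1 := by
    rw [hM, hB]
    simp only [sub_mul, add_mul, mul_add, mul_sub, Matrix.smul_mul, Matrix.mul_smul,
      Matrix.one_mul, Matrix.mul_one, hGG, smul_smul]
    module
  refine ⟨((μ - 1) * (μ - (1 - abar)))⁻¹ • B, ?_, ?_⟩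
  · rw [Matrix.mul_smul, hMB, smul_smul, inv_mul_cancel₀ hp, one_smul]
  · rw [Matrix.smul_mul, hBM, smul_smul, inv_mul_cancel₀ hp, one_smul]
end

section
/- Let P be a π-reversible stochastic matrix, and let M and B be the Metropolis–Hastings and Barker orbit kernels associated with π and the orbit partition. Then ρ(MPM) ≤ ρ(P) and ρ(BPB) ≤ ρ(P), where ρ(Q) := sup over nonzero f ∈ ℓ²₀(π) of |⟨f,Qf⟩_π|/⟨f,f⟩_π. -/
open Matrix Finset

/-- The `π`-weighted inner product. -/
noncomputable def innerPi {n : ℕ} (π : Fin n → ℝ) (f g : Fin n → ℝ) : ℝ :=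
  ∑ x, π x * f x * g x

/-- Rayleigh-quotient form of the second-largest eigenvalue in modulus. -/
noncomputable def rho {n : ℕ} (π : Fin n → ℝ) (Q : Matrix (Fin n) (Fin n) ℝ) : ℝ :=
  sSup {r : ℝ | ∃ f : Fin n → ℝ, f ≠ 0 ∧ (∑ x, π x * f x) = 0 ∧
    r = |innerPi π f (Q.mulVec f)| / innerPi π f f}

noncomputable def orbKer {n k : ℕ} (w : Fin n → Fin n → ℝ) (part : Fin n → Fin k) :
    Matrix (Fin n) (Fin n) ℝ :=
  Matrix.of fun x y =>
    if x = y then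
      1 - ∑ z ∈ Finset.univ.filter (fun z => z ≠ x ∧ part z = part x),
            w z x / ((orbCard part (part x) : ℝ) - 1)
    else if part y = part x then
      w y x / ((orbCard part (part x) : ℝ) - 1)
    else 0

lemma orbS_card {n k : ℕ} (part : Fin n → Fin k) (x : Fin n) :
    (orbCard part (part x) : ℝ) - 1 =
      ((Finset.univ.filter (fun z => z ≠ x ∧ part z = part x)).card : ℝ) := by
  have h : Finset.univ.filter (fun z => part z = part x) =
      insert x (Finset.univ.filter (fun z => z ≠ x ∧ part z = part x)) := by
    ext z; by_cases hz : z = x <;> simp [hz]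
  have hx : x ∉ Finset.univ.filter (fun z => z ≠ x ∧ part z = part x) := by simp
  have h2 : orbCard part (part x) =
      (Finset.univ.filter (fun z => z ≠ x ∧ part z = part x)).card + 1 := by
    rw [orbCard, h, Finset.card_insert_of_notMem hx]
  rw [h2]; push_cast; ring

lemma orbKer_sum_le {n k : ℕ} (w : Fin n → Fin n → ℝ) (part : Fin n → Fin k)
    (hw0 : ∀ x y : Fin n, 0 ≤ w y x) (hw1 : ∀ x y : Fin n, w y x ≤ 1) (x : Fin n) :
    ∑ z ∈ Finset.univ.filter (fun z => z ≠ x ∧ part z = part x),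
      w z x / ((orbCard part (part x) : ℝ) - 1) ≤ 1 := by
  set S := Finset.univ.filter (fun z => z ≠ x ∧ part z = part x) with hS
  rw [orbS_card part x]
  rcases Nat.eq_zero_or_pos S.card with h0 | hpos
  · rw [Finset.card_eq_zero] at h0
    simp [h0]
  · have hc : (0:ℝ) < (S.card : ℝ) := by exact_mod_cast hpos
    calc ∑ z ∈ S, w z x / (S.card : ℝ)
        ≤ ∑ z ∈ S, 1 / (S.card : ℝ) := by
          apply Finset.sum_le_sum
          intro z _
          gcongr
          exact hw1 x z
      _ = 1 := by
          rw [Finset.sum_const, nsmul_eq_mul]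
          field_simp

lemma orbKer_nonneg {n k : ℕ} (w : Fin n → Fin n → ℝ) (part : Fin n → Fin k)
    (hw0 : ∀ x y : Fin n, 0 ≤ w y x) (hw1 : ∀ x y : Fin n, w y x ≤ 1) :
    ∀ x y, 0 ≤ orbKer w part x y := by
  intro x y
  unfold orbKer
  simp only [Matrix.of_apply]
  by_cases hxy : x = y
  · rw [if_pos hxy]
    linarith [orbKer_sum_le w part hw0 hw1 x]
  · rw [if_neg hxy]
    by_cases hp : part y = part x
    · rw [if_pos hp]
      apply div_nonneg (hw0 x y)
      rw [orbS_card part x]; positivity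
    · rw [if_neg hp]

lemma orbKer_row {n k : ℕ} (w : Fin n → Fin n → ℝ) (part : Fin n → Fin k) (x : Fin n) :
    ∑ y, orbKer w part x y = 1 := by
  rw [← Finset.add_sum_erase _ _ (Finset.mem_univ x)]
  have h1 : orbKer w part x x = 1 - ∑ z ∈ Finset.univ.filter (fun z => z ≠ x ∧ part z = part x),
      w z x / ((orbCard part (part x) : ℝ) - 1) := by
    simp [orbKer]
  have h2 : ∑ y ∈ Finset.univ.erase x, orbKer w part x y =
      ∑ z ∈ Finset.univ.filter (fun z => z ≠ x ∧ part z = part x),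
        w z x / ((orbCard part (part x) : ℝ) - 1) := by
    have he : ∀ y ∈ Finset.univ.erase x, orbKer w part x y =
        if part y = part x then w y x / ((orbCard part (part x) : ℝ) - 1) else 0 := by
      intro y hy
      have hxy : x ≠ y := fun h => (Finset.mem_erase.mp hy).1 h.symm
      simp [orbKer, hxy]
    rw [Finset.sum_congr rfl he, Finset.sum_ite, Finset.sum_const, smul_zero, add_zero]
    apply Finset.sum_congr _ (fun _ _ => rfl)
    ext z
    simp [and_comm, eq_comm (a := z) (b := x), Finset.mem_erase]
  rw [h1, h2]; ring


lemma orbKer_rev {n k : ℕ} (π : Fin n → ℝ) (w : Fin n → Fin n → ℝ) (part : Fin n → Fin k)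
    (hrev : ∀ x y : Fin n, π x * w y x = π y * w x y) :
    ∀ x y, π x * orbKer w part x y = π y * orbKer w part y x := by
  intro x y
  by_cases hxy : x = y
  · rw [hxy]
  · have hyx : ¬ (y = x) := fun h => hxy h.symm
    simp only [orbKer, Matrix.of_apply, if_neg hxy, if_neg hyx]
    by_cases hp : part y = part x
    · rw [if_pos hp, if_pos hp.symm, hp]
      rw [mul_div_assoc', mul_div_assoc', hrev x y]
    · rw [if_neg hp, if_neg (fun h => hp h.symm), mul_zero, mul_zero]

section generic
variable {n : ℕ} (π : Fin n → ℝ)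

lemma innerPi_pos (hπpos : ∀ x, 0 < π x) {f : Fin n → ℝ} (hf : f ≠ 0) :
    0 < innerPi π f f := by
  obtain ⟨x, hx⟩ : ∃ x, f x ≠ 0 := by
    by_contra h; push_neg at h; exact hf (funext h)
  apply Finset.sum_pos' (fun y _ => by nlinarith [mul_nonneg (hπpos y).le (mul_self_nonneg (f y))])
  exact ⟨x, Finset.mem_univ x, by nlinarith [mul_pos (hπpos x) (mul_self_pos.mpr hx)]⟩

/-- invariance from reversibility + row sums -/
lemma col_sum (Q : Matrix (Fin n) (Fin n) ℝ)
    (hQrow : ∀ x, ∑ y, Q x y = 1) (hQrev : ∀ x y, π x * Q x y = π y * Q y x)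
    (y : Fin n) : ∑ x, π x * Q x y = π y := by
  calc ∑ x, π x * Q x y = ∑ x, π y * Q y x := by
        exact Finset.sum_congr rfl (fun x _ => hQrev x y)
    _ = π y * ∑ x, Q y x := by rw [Finset.mul_sum]
    _ = π y := by rw [hQrow y, mul_one]

/-- selfadjointness -/
lemma innerPi_mulVec (Q : Matrix (Fin n) (Fin n) ℝ)
    (hQrev : ∀ x y, π x * Q x y = π y * Q y x) (f g : Fin n → ℝ) :
    innerPi π f (Q.mulVec g) = innerPi π (Q.mulVec f) g := by
  unfold innerPi Matrix.mulVec dotProduct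
  have L : ∑ x, π x * f x * ∑ y, Q x y * g y = ∑ x, ∑ y, π x * Q x y * f x * g y := by
    apply Finset.sum_congr rfl; intro x _
    rw [Finset.mul_sum]
    exact Finset.sum_congr rfl fun y _ => by ring
  have R : ∑ y, π y * (∑ x, Q y x * f x) * g y = ∑ y, ∑ x, π y * Q y x * f x * g y := by
    apply Finset.sum_congr rfl; intro y _
    rw [Finset.mul_sum, Finset.sum_mul]
    exact Finset.sum_congr rfl fun x _ => by ring
  rw [L, R, Finset.sum_comm]
  exact Finset.sum_congr rfl fun y _ => Finset.sum_congr rfl fun x _ => by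
    linear_combination f x * g y * hQrev x y

/-- the key quadratic-form bound for a stochastic reversible kernel -/
lemma abs_innerPi_le (Q : Matrix (Fin n) (Fin n) ℝ)
    (hQ0 : ∀ x y, 0 ≤ Q x y) (hQrow : ∀ x, ∑ y, Q x y = 1)
    (hQrev : ∀ x y, π x * Q x y = π y * Q y x)
    (hπpos : ∀ x, 0 < π x) (f : Fin n → ℝ) :
    |innerPi π f (Q.mulVec f)| ≤ innerPi π f f := by
  unfold innerPi Matrix.mulVec dotProduct
  have step1 : |∑ x, π x * f x * ∑ y, Q x y * f y| ≤
      ∑ x, ∑ y, π x * Q x y * |f x| * |f y| := by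
    calc |∑ x, π x * f x * ∑ y, Q x y * f y|
        ≤ ∑ x, |π x * f x * ∑ y, Q x y * f y| := Finset.abs_sum_le_sum_abs _ _
      _ ≤ ∑ x, ∑ y, π x * Q x y * |f x| * |f y| := by
          apply Finset.sum_le_sum; intro x _
          rw [Finset.mul_sum]
          calc |∑ y, π x * f x * (Q x y * f y)| ≤ ∑ y, |π x * f x * (Q x y * f y)| :=
                Finset.abs_sum_le_sum_abs _ _
            _ = ∑ y, π x * Q x y * |f x| * |f y| := by
                apply Finset.sum_congr rfl; intro y _
                rw [abs_mul, abs_mul, abs_mul, abs_of_pos (hπpos x), abs_of_nonneg (hQ0 x y)]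
                ring
  have hA : ∑ x, ∑ y, π x * Q x y * (f x)^2 / 2 = ∑ x, π x * (f x)^2 / 2 := by
    apply Finset.sum_congr rfl; intro x _
    calc ∑ y, π x * Q x y * (f x)^2/2
        = ∑ y, Q x y * (π x * (f x)^2/2) := Finset.sum_congr rfl fun y _ => by ring
      _ = (∑ y, Q x y) * (π x * (f x)^2/2) := (Finset.sum_mul _ _ _).symm
      _ = π x * (f x)^2/2 := by rw [hQrow x, one_mul]
  have hB : ∑ x, ∑ y, π x * Q x y * (f y)^2 / 2 = ∑ y, π y * ((f y)^2 / 2) := by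
    rw [Finset.sum_comm]
    apply Finset.sum_congr rfl; intro y _
    calc ∑ x, π x * Q x y * (f y)^2/2
        = ∑ x, (π x * Q x y) * ((f y)^2/2) := Finset.sum_congr rfl fun x _ => by ring
      _ = (∑ x, π x * Q x y) * ((f y)^2/2) := (Finset.sum_mul _ _ _).symm
      _ = π y * ((f y)^2/2) := by rw [col_sum π Q hQrow hQrev y]
  have step2 : ∑ x, ∑ y, π x * Q x y * |f x| * |f y| ≤ ∑ x, π x * f x * f x := by
    have hsplit : ∀ x y : Fin n, π x * Q x y * |f x| * |f y| ≤
        π x * Q x y * ((f x)^2 + (f y)^2) / 2 := by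
      intro x y
      have h1 : 0 ≤ π x * Q x y := mul_nonneg (hπpos x).le (hQ0 x y)
      nlinarith [mul_le_mul_of_nonneg_left (sq_nonneg (|f x| - |f y|)) h1, sq_abs (f x), sq_abs (f y)]
    calc ∑ x, ∑ y, π x * Q x y * |f x| * |f y|
        ≤ ∑ x, ∑ y, π x * Q x y * ((f x)^2 + (f y)^2) / 2 := by
          apply Finset.sum_le_sum; intro x _
          exact Finset.sum_le_sum (fun y _ => hsplit x y)
      _ = (∑ x, ∑ y, π x * Q x y * (f x)^2/2) + ∑ x, ∑ y, π x * Q x y * (f y)^2/2 := by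
          rw [← Finset.sum_add_distrib]
          exact Finset.sum_congr rfl fun x _ => by
            rw [← Finset.sum_add_distrib]
            exact Finset.sum_congr rfl fun y _ => by ring
      _ = ∑ x, π x * (f x)^2/2 + ∑ y, π y * ((f y)^2/2) := by rw [hA, hB]
      _ = ∑ x, π x * f x * f x := by
          rw [← Finset.sum_add_distrib]
          exact Finset.sum_congr rfl fun x _ => by ring
  linarith [step1, step2]


lemma innerPi_comm (g h : Fin n → ℝ) : innerPi π g h = innerPi π h g := by
  unfold innerPi; exact Finset.sum_congr rfl fun x _ => by ring

lemma innerPi_zero_left (g h : Fin n → ℝ) (hg : g = 0) : innerPi π g h = 0 := by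
  subst hg; simp [innerPi]

lemma contraction (Q : Matrix (Fin n) (Fin n) ℝ)
    (hQ0 : ∀ x y, 0 ≤ Q x y) (hQrow : ∀ x, ∑ y, Q x y = 1)
    (hQrev : ∀ x y, π x * Q x y = π y * Q y x)
    (hπpos : ∀ x, 0 < π x) (f : Fin n → ℝ) :
    innerPi π (Q.mulVec f) (Q.mulVec f) ≤ innerPi π f f := by
  have h2 : innerPi π (Q.mulVec f) (Q.mulVec f) = innerPi π f ((Q * Q).mulVec f) := by
    rw [← Matrix.mulVec_mulVec, innerPi_mulVec π Q hQrev]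
    exact innerPi_comm π _ _
  have hQQ0 : ∀ x y, 0 ≤ (Q * Q) x y := by
    intro x y; rw [Matrix.mul_apply]
    exact Finset.sum_nonneg fun z _ => mul_nonneg (hQ0 x z) (hQ0 z y)
  have hQQrow : ∀ x, ∑ y, (Q * Q) x y = 1 := by
    intro x
    simp only [Matrix.mul_apply]
    rw [Finset.sum_comm]
    calc ∑ z, ∑ y, Q x z * Q z y = ∑ z, Q x z * ∑ y, Q z y := by
          exact Finset.sum_congr rfl fun z _ => (Finset.mul_sum _ _ _).symm
      _ = ∑ z, Q x z := by
          exact Finset.sum_congr rfl fun z _ => by rw [hQrow z, mul_one]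
      _ = 1 := hQrow x
  have hQQrev : ∀ x y, π x * (Q * Q) x y = π y * (Q * Q) y x := by
    intro x y
    simp only [Matrix.mul_apply, Finset.mul_sum]
    apply Finset.sum_congr rfl; intro z _
    calc π x * (Q x z * Q z y) = (π x * Q x z) * Q z y := by ring
      _ = (π z * Q z x) * Q z y := by rw [hQrev x z]
      _ = (π z * Q z y) * Q z x := by ring
      _ = (π y * Q y z) * Q z x := by rw [hQrev z y]
      _ = π y * (Q y z * Q z x) := by ring
  calc innerPi π (Q.mulVec f) (Q.mulVec f) = innerPi π f ((Q * Q).mulVec f) := h2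
    _ ≤ |innerPi π f ((Q * Q).mulVec f)| := le_abs_self _
    _ ≤ innerPi π f f := abs_innerPi_le π (Q * Q) hQQ0 hQQrow hQQrev hπpos f

lemma rho_sandwich (Q P : Matrix (Fin n) (Fin n) ℝ)
    (hπpos : ∀ x, 0 < π x)
    (hQ0 : ∀ x y, 0 ≤ Q x y) (hQrow : ∀ x, ∑ y, Q x y = 1)
    (hQrev : ∀ x y, π x * Q x y = π y * Q y x)
    (hP0 : ∀ x y, 0 ≤ P x y) (hProw : ∀ x, ∑ y, P x y = 1)
    (hPrev : ∀ x y, π x * P x y = π y * P y x) :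
    rho π (Q * P * Q) ≤ rho π P := by
  set setP := {r : ℝ | ∃ f : Fin n → ℝ, f ≠ 0 ∧ (∑ x, π x * f x) = 0 ∧
    r = |innerPi π f (P.mulVec f)| / innerPi π f f} with hsetP
  have hbdd : ∀ r ∈ setP, r ≤ 1 := by
    rintro r ⟨f, hf, -, rfl⟩
    rw [div_le_one (innerPi_pos π hπpos hf)]
    exact abs_innerPi_le π P hP0 hProw hPrev hπpos f
  have hBdd : BddAbove setP := ⟨1, hbdd⟩
  have hrho0 : 0 ≤ rho π P := by
    by_cases hne : setP.Nonempty
    · obtain ⟨r, hr⟩ := hne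
      obtain ⟨f, hf, -, hrf⟩ := id hr
      have h0 : (0:ℝ) ≤ r := hrf ▸ div_nonneg (abs_nonneg _) (innerPi_pos π hπpos hf).le
      exact h0.trans (le_csSup hBdd hr)
    · rw [Set.not_nonempty_iff_eq_empty] at hne
      rw [rho, ← hsetP, hne, Real.sSup_empty]
  apply Real.sSup_le _ hrho0
  rintro r ⟨f, hf, hmean, rfl⟩
  have key : innerPi π f ((Q * P * Q).mulVec f) =
      innerPi π (Q.mulVec f) (P.mulVec (Q.mulVec f)) := by
    rw [← Matrix.mulVec_mulVec, ← Matrix.mulVec_mulVec, innerPi_mulVec π Q hQrev]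
  set g := Q.mulVec f with hg
  by_cases hgz : g = 0
  · rw [key, innerPi_zero_left π g _ hgz, abs_zero, zero_div]
    exact hrho0
  · have hgmean : (∑ x, π x * g x) = 0 := by
      calc ∑ x, π x * g x = ∑ x, ∑ y, π x * Q x y * f y := by
            apply Finset.sum_congr rfl; intro x _
            rw [hg, Matrix.mulVec, dotProduct, Finset.mul_sum]
            exact Finset.sum_congr rfl fun y _ => by ring
        _ = ∑ y, (∑ x, π x * Q x y) * f y := by
            rw [Finset.sum_comm]
            exact Finset.sum_congr rfl fun y _ => (Finset.sum_mul _ _ _).symm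
        _ = ∑ y, π y * f y := by
            exact Finset.sum_congr rfl fun y _ => by rw [col_sum π Q hQrow hQrev y]
        _ = 0 := hmean
    have hmem : |innerPi π g (P.mulVec g)| / innerPi π g g ∈ setP :=
      ⟨g, hgz, hgmean, rfl⟩
    have hle : |innerPi π g (P.mulVec g)| / innerPi π g g ≤ rho π P := le_csSup hBdd hmem
    have hcontr : innerPi π g g ≤ innerPi π f f := contraction π Q hQ0 hQrow hQrev hπpos f
    have : |innerPi π f ((Q * P * Q).mulVec f)| / innerPi π f f ≤
        |innerPi π g (P.mulVec g)| / innerPi π g g := by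
      rw [key]
      exact div_le_div_of_nonneg_left (abs_nonneg _) (innerPi_pos π hπpos hgz) hcontr
    exact this.trans hle

end generic

lemma mhKer_eq {n k : ℕ} (π : Fin n → ℝ) (part : Fin n → Fin k) :
    (Matrix.of fun x y =>
      if x = y then
        1 - ∑ z ∈ Finset.univ.filter (fun z => z ≠ x ∧ part z = part x),
              min 1 (π z / π x) / ((orbCard part (part x) : ℝ) - 1)
      else if part y = part x then
        min 1 (π y / π x) / ((orbCard part (part x) : ℝ) - 1)
      else 0 : Matrix (Fin n) (Fin n) ℝ) =
    orbKer (fun z x => min 1 (π z / π x)) part := rfl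

lemma stmt5' {n k : ℕ}
    (π : Fin n → ℝ) (hπpos : ∀ x, 0 < π x)
    (part : Fin n → Fin k)
    (P : Matrix (Fin n) (Fin n) ℝ)
    (hPnonneg : ∀ x y, 0 ≤ P x y) (hProw : ∀ x, ∑ y, P x y = 1)
    (hPrev : ∀ x y, π x * P x y = π y * P y x) :
    rho π (orbKer (fun z x => min 1 (π z / π x)) part * P *
        orbKer (fun z x => min 1 (π z / π x)) part) ≤ rho π P ∧
    rho π (orbKer (fun z x => π z / (π x + π z)) part * P *
        orbKer (fun z x => π z / (π x + π z)) part) ≤ rho π P := by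
  constructor
  · have hw0 : ∀ x y : Fin n, 0 ≤ min 1 (π y / π x) :=
      fun x y => le_min zero_le_one (div_nonneg (hπpos y).le (hπpos x).le)
    have hw1 : ∀ x y : Fin n, min 1 (π y / π x) ≤ 1 := fun x y => min_le_left _ _
    have hrev : ∀ x y : Fin n, π x * min 1 (π y / π x) = π y * min 1 (π x / π y) := by
      intro x y
      have hx := (hπpos x).ne'
      have hy := (hπpos y).ne'
      rw [mul_min_of_nonneg _ _ (hπpos x).le, mul_min_of_nonneg _ _ (hπpos y).le]
      rw [mul_one, mul_one, mul_div_cancel₀ _ hx, mul_div_cancel₀ _ hy, min_comm]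
    exact rho_sandwich π _ P hπpos
      (orbKer_nonneg _ part hw0 hw1) (orbKer_row _ part)
      (orbKer_rev π _ part hrev) hPnonneg hProw hPrev
  · have hsum : ∀ x y : Fin n, 0 < π x + π y := fun x y => add_pos (hπpos x) (hπpos y)
    have hw0 : ∀ x y : Fin n, 0 ≤ π y / (π x + π y) :=
      fun x y => div_nonneg (hπpos y).le (hsum x y).le
    have hw1 : ∀ x y : Fin n, π y / (π x + π y) ≤ 1 := by
      intro x y
      rw [div_le_one (hsum x y)]
      linarith [hπpos x]
    have hrev : ∀ x y : Fin n, π x * (π y / (π x + π y)) = π y * (π x / (π y + π x)) := by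
      intro x y
      rw [add_comm (π y) (π x)]
      ring
    exact rho_sandwich π _ P hπpos
      (orbKer_nonneg _ part hw0 hw1) (orbKer_row _ part)
      (orbKer_rev π _ part hrev) hPnonneg hProw hPrev

/-- `ρ(MPM) ≤ ρ(P)` and `ρ(BPB) ≤ ρ(P)` for `π`-reversible stochastic `P`. -/
theorem stmt5 {n k : ℕ} (hn : 0 < n)
    (π : Fin n → ℝ) (hπpos : ∀ x, 0 < π x) (hπsum : ∑ x, π x = 1)
    (part : Fin n → Fin k) (hpart : Function.Surjective part)
    (P : Matrix (Fin n) (Fin n) ℝ)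
    (hPnonneg : ∀ x y, 0 ≤ P x y) (hProw : ∀ x, ∑ y, P x y = 1)
    (hPrev : ∀ x y, π x * P x y = π y * P y x) :
    rho π (mhKer π part * P * mhKer π part) ≤ rho π P ∧
      rho π (barkerKer π part * P * barkerKer π part) ≤ rho π P := by
  exact stmt5' π hπpos part P hPnonneg hProw hPrev
end

section
/- Let G, M, B be the Gibbs, Metropolis–Hastings and Barker orbit kernels associated with π and the same orbit partition. Then, as matrix products, GM = MG = G and GB = BG = G. -/
open Matrix Finset

theorem vecMul_eq_self_of_detailed_balance {ι R : Type*} [Fintype ι] [CommSemiring R]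
    {π : ι → R} {K : Matrix ι ι R} (hrow : ∀ x, ∑ y, K x y = 1)
    (hrev : ∀ x y, π x * K x y = π y * K y x) : π ᵥ* K = π := by
  ext y
  simp only [vecMul, dotProduct, hrev _ y, ← Finset.mul_sum, hrow, mul_one]

section OrbitKernels

variable {n k : ℕ} (part : Fin n → Fin k)

def orbitRateKer (f : Fin n → Fin n → ℝ) : Matrix (Fin n) (Fin n) ℝ :=
  Matrix.of fun x y =>
    if x = y then 1 - ∑ z ∈ univ.filter (fun z => z ≠ x ∧ part z = part x), f x z
    else if part y = part x then f x y else 0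

theorem mhKer_eq_orbitRateKer (π : Fin n → ℝ) :
    mhKer π part =
      orbitRateKer part fun x y => min 1 (π y / π x) / ((orbCard part (part x) : ℝ) - 1) :=
  rfl

theorem barkerKer_eq_orbitRateKer (π : Fin n → ℝ) :
    barkerKer π part =
      orbitRateKer part fun x y => π y / (π x + π y) / ((orbCard part (part x) : ℝ) - 1) :=
  rfl

variable {part}

theorem orbitRateKer_apply_of_part_ne (f : Fin n → Fin n → ℝ) {x y : Fin n}
    (h : part y ≠ part x) : orbitRateKer part f x y = 0 := by
  have hxy : x ≠ y := by rintro rfl; exact h rfl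
  simp [orbitRateKer, hxy, h]

theorem orbitRateKer_row_sum (f : Fin n → Fin n → ℝ) (x : Fin n) :
    ∑ y, orbitRateKer part f x y = 1 := by
  rw [← add_sum_erase _ _ (mem_univ x)]
  have hoff : ∀ y ∈ univ.erase x,
      orbitRateKer part f x y = if part y = part x then f x y else 0 := fun y hy => by
    simp [orbitRateKer, Ne.symm (ne_of_mem_erase hy)]
  have hnbhd : (univ.erase x).filter (fun y => part y = part x) =
      univ.filter (fun z => z ≠ x ∧ part z = part x) := by
    ext; simp
  rw [sum_congr rfl hoff, ← sum_filter, hnbhd]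
  simp [orbitRateKer]

theorem orbitRateKer_detailed_balance {π : Fin n → ℝ} {f : Fin n → Fin n → ℝ}
    (hf : ∀ x y, part y = part x → π x * f x y = π y * f y x) (x y : Fin n) :
    π x * orbitRateKer part f x y = π y * orbitRateKer part f y x := by
  by_cases hxy : x = y
  · subst hxy; rfl
  by_cases hp : part y = part x
  · simpa [orbitRateKer, hxy, Ne.symm hxy, hp] using hf x y hp
  · rw [orbitRateKer_apply_of_part_ne f hp, orbitRateKer_apply_of_part_ne f (Ne.symm hp)]
    simp

theorem mul_min_one_div {a : ℝ} (ha : 0 < a) (b : ℝ) : a * min 1 (b / a) = min a b := by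
  rw [mul_min_of_nonneg _ _ ha.le, mul_one, mul_div_cancel₀ _ ha.ne']

theorem mhKer_detailed_balance {π : Fin n → ℝ} (hπ : ∀ x, 0 < π x) (x y : Fin n) :
    π x * mhKer π part x y = π y * mhKer π part y x := by
  rw [mhKer_eq_orbitRateKer]
  refine orbitRateKer_detailed_balance (fun x y hp => ?_) x y
  rw [hp, mul_div_assoc', mul_div_assoc', mul_min_one_div (hπ x), mul_min_one_div (hπ y),
    min_comm]

theorem barkerKer_detailed_balance (π : Fin n → ℝ) (x y : Fin n) :
    π x * barkerKer π part x y = π y * barkerKer π part y x := by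
  rw [barkerKer_eq_orbitRateKer]
  refine orbitRateKer_detailed_balance (fun x y hp => ?_) x y
  rw [hp, add_comm (π y)]
  ring

theorem gibbsKer_apply_of_part_eq (π : Fin n → ℝ) {x z : Fin n} (h : part z = part x)
    (y : Fin n) : gibbsKer π part z y = gibbsKer π part x y := by
  simp [gibbsKer, h]

variable {K : Matrix (Fin n) (Fin n) ℝ}

theorem mul_gibbsKer_eq_self (π : Fin n → ℝ) (hK : ∀ x y, part y ≠ part x → K x y = 0)
    (hrow : ∀ x, ∑ y, K x y = 1) : K * gibbsKer π part = gibbsKer π part := by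
  ext x y
  have hterm : ∀ z, K x z * gibbsKer π part z y = K x z * gibbsKer π part x y := fun z => by
    by_cases hz : part z = part x
    · rw [gibbsKer_apply_of_part_eq π hz]
    · simp [hK x z hz]
  simp only [mul_apply, hterm, ← sum_mul, hrow, one_mul]

theorem gibbsKer_mul_eq_self (π : Fin n → ℝ) (hK : ∀ x y, part y ≠ part x → K x y = 0)
    (hrow : ∀ x, ∑ y, K x y = 1) (hrev : ∀ x y, π x * K x y = π y * K y x) :
    gibbsKer π part * K = gibbsKer π part := by
  ext x y
  rw [mul_apply]
  by_cases hy : part y = part x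
  · have hterm : ∀ z, gibbsKer π part x z * K z y = π z * K z y / orbMass π part (part x) :=
      fun z => by
        by_cases hz : part z = part x
        · simp only [gibbsKer, of_apply, if_pos hz]; ring
        · simp [gibbsKer, hz, hK z y (hy.trans_ne (Ne.symm hz))]
    have hstat := congrFun (vecMul_eq_self_of_detailed_balance hrow hrev) y
    simp only [vecMul, dotProduct] at hstat
    rw [sum_congr rfl fun z _ => hterm z, ← sum_div, hstat]
    simp [gibbsKer, hy]
  · refine (sum_eq_zero fun z _ => ?_).trans (by simp [gibbsKer, hy])
    by_cases hz : part z = part x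
    · simp [hK z y (hz ▸ hy)]
    · simp [gibbsKer, hz]

end OrbitKernels

theorem stmt6_general {n k : ℕ}
    (π : Fin n → ℝ) (hπpos : ∀ x, 0 < π x)
    (part : Fin n → Fin k) :
    gibbsKer π part * mhKer π part = gibbsKer π part ∧
    mhKer π part * gibbsKer π part = gibbsKer π part ∧
    gibbsKer π part * barkerKer π part = gibbsKer π part ∧
    barkerKer π part * gibbsKer π part = gibbsKer π part := by
  have hM : ∀ x y, part y ≠ part x → mhKer π part x y = 0 := fun _ _ hxy => by
    rw [mhKer_eq_orbitRateKer, orbitRateKer_apply_of_part_ne _ hxy]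
  have hB : ∀ x y, part y ≠ part x → barkerKer π part x y = 0 := fun _ _ hxy => by
    rw [barkerKer_eq_orbitRateKer, orbitRateKer_apply_of_part_ne _ hxy]
  have hMrow : ∀ x, ∑ y, mhKer π part x y = 1 := by
    rw [mhKer_eq_orbitRateKer]; exact orbitRateKer_row_sum _
  have hBrow : ∀ x, ∑ y, barkerKer π part x y = 1 := by
    rw [barkerKer_eq_orbitRateKer]; exact orbitRateKer_row_sum _
  exact ⟨gibbsKer_mul_eq_self π hM hMrow (mhKer_detailed_balance hπpos),
    mul_gibbsKer_eq_self π hM hMrow,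
    gibbsKer_mul_eq_self π hB hBrow (barkerKer_detailed_balance π),
    mul_gibbsKer_eq_self π hB hBrow⟩

/-- `GM = MG = G` and `GB = BG = G`. -/
theorem stmt6 {n k : ℕ} (hn : 0 < n)
    (π : Fin n → ℝ) (hπpos : ∀ x, 0 < π x) (hπsum : ∑ x, π x = 1)
    (part : Fin n → Fin k) (hpart : Function.Surjective part) :
    gibbsKer π part * mhKer π part = gibbsKer π part ∧
    mhKer π part * gibbsKer π part = gibbsKer π part ∧
    gibbsKer π part * barkerKer π part = gibbsKer π part ∧
    barkerKer π part * gibbsKer π part = gibbsKer π part :=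
  stmt6_general π hπpos part
end

section
/- Let P be a π-reversible stochastic matrix, let G and M be the Gibbs and Metropolis–Hastings orbit kernels for the same orbit partition, and set θ := sup over nonzero f : X → ℝ of ‖(M−G)f‖_π / ‖f‖_π. Then for every positive integer t, 0 ≤ ρ(M^t P M^t) − ρ(GPG) ≤ ρ(P)·(2θ^t + θ^{2t}). In particular, if θ < 1 then ρ(M^t P M^t) → ρ(GPG) as t → ∞. -/
/-!
`G` and `M` are `π`-self-adjoint, mean-preserving contractions of `ℓ²(π)`, and `G` (the
orthogonal projection onto orbit-wise constant functions) is fixed by `M` on both sides: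
`MG = GM = G² = G`. Hence `(M - G)ᵗ = Mᵗ - G`, whose `π`-norm is at most `θᵗ`. Writing
`Mᵗf = Gf + (Mᵗ - G)f` and expanding `⟨f, MᵗPMᵗf⟩ = ⟨Mᵗf, PMᵗf⟩` leaves the main term
`⟨f, GPGf⟩` plus cross terms, which the polarization bound `|⟨u, Pv⟩| ≤ ρ(P)‖u‖‖v‖` on mean-zero
functions controls. Conversely `g = Gf` satisfies `Mᵗg = g` and `‖g‖ ≤ ‖f‖`, so
`⟨f, GPGf⟩ = ⟨g, MᵗPMᵗg⟩` gives `ρ(GPG) ≤ ρ(MᵗPMᵗ)`.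
-/

open Matrix Finset Filter Topology

/-- The `π`-weighted norm. -/
noncomputable def normPi {n : ℕ} (π : Fin n → ℝ) (f : Fin n → ℝ) : ℝ :=
  Real.sqrt (∑ x, π x * f x * f x)

namespace OrbitKernel

variable {n : ℕ} {π : Fin n → ℝ}

section InnerPi

lemma innerPi_comm (f g : Fin n → ℝ) : innerPi π f g = innerPi π g f := by
  simp only [innerPi, mul_right_comm]

lemma innerPi_add_left (f g h : Fin n → ℝ) :
    innerPi π (f + g) h = innerPi π f h + innerPi π g h := by
  simp only [innerPi, Pi.add_apply, mul_add, add_mul, Finset.sum_add_distrib]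

lemma innerPi_add_right (f g h : Fin n → ℝ) :
    innerPi π f (g + h) = innerPi π f g + innerPi π f h := by
  simp only [innerPi, Pi.add_apply, mul_add, Finset.sum_add_distrib]

lemma innerPi_sub_left (f g h : Fin n → ℝ) :
    innerPi π (f - g) h = innerPi π f h - innerPi π g h := by
  simp only [innerPi, Pi.sub_apply, mul_sub, sub_mul, Finset.sum_sub_distrib]

lemma innerPi_sub_right (f g h : Fin n → ℝ) :
    innerPi π f (g - h) = innerPi π f g - innerPi π f h := by
  simp only [innerPi, Pi.sub_apply, mul_sub, Finset.sum_sub_distrib]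

lemma innerPi_smul_left (c : ℝ) (f g : Fin n → ℝ) :
    innerPi π (c • f) g = c * innerPi π f g := by
  simp only [innerPi, Pi.smul_apply, smul_eq_mul, Finset.mul_sum]
  exact Finset.sum_congr rfl fun _ _ => by ring

lemma innerPi_smul_right (c : ℝ) (f g : Fin n → ℝ) :
    innerPi π f (c • g) = c * innerPi π f g := by
  rw [innerPi_comm, innerPi_smul_left, innerPi_comm]

lemma weight_mul_self_nonneg (hπ : ∀ x, 0 < π x) (x : Fin n) (a : ℝ) : 0 ≤ π x * a * a := by
  rw [mul_assoc]; exact mul_nonneg (hπ x).le (mul_self_nonneg a)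

lemma innerPi_self_nonneg (hπ : ∀ x, 0 < π x) (f : Fin n → ℝ) : 0 ≤ innerPi π f f :=
  Finset.sum_nonneg fun x _ => weight_mul_self_nonneg hπ x (f x)

lemma innerPi_self_pos (hπ : ∀ x, 0 < π x) {f : Fin n → ℝ} (hf : f ≠ 0) :
    0 < innerPi π f f := by
  obtain ⟨x, hx⟩ := Function.ne_iff.mp hf
  refine Finset.sum_pos' (fun z _ => weight_mul_self_nonneg hπ z (f z)) ⟨x, Finset.mem_univ x, ?_⟩
  rw [mul_assoc]; exact mul_pos (hπ x) (mul_self_pos.mpr hx)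

lemma normPi_eq_sqrt_innerPi (f : Fin n → ℝ) : normPi π f = √(innerPi π f f) := rfl

lemma normPi_nonneg (f : Fin n → ℝ) : 0 ≤ normPi π f := Real.sqrt_nonneg _

lemma normPi_mul_self (hπ : ∀ x, 0 < π x) (f : Fin n → ℝ) :
    normPi π f * normPi π f = innerPi π f f :=
  Real.mul_self_sqrt (innerPi_self_nonneg hπ f)

lemma normPi_pos (hπ : ∀ x, 0 < π x) {f : Fin n → ℝ} (hf : f ≠ 0) : 0 < normPi π f :=
  Real.sqrt_pos.mpr (innerPi_self_pos hπ hf)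

lemma sq_innerPi_le (hπ : ∀ x, 0 < π x) (f g : Fin n → ℝ) :
    innerPi π f g ^ 2 ≤ innerPi π f f * innerPi π g g :=
  Finset.sum_sq_le_sum_mul_sum_of_sq_le_mul _
    (fun x _ => weight_mul_self_nonneg hπ x (f x)) (fun x _ => weight_mul_self_nonneg hπ x (g x))
    (fun x _ => le_of_eq (by ring))

lemma abs_innerPi_le (hπ : ∀ x, 0 < π x) (f g : Fin n → ℝ) :
    |innerPi π f g| ≤ normPi π f * normPi π g := by
  rw [← Real.sqrt_sq_eq_abs, normPi_eq_sqrt_innerPi, normPi_eq_sqrt_innerPi,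
    ← Real.sqrt_mul (innerPi_self_nonneg hπ f)]
  exact Real.sqrt_le_sqrt (sq_innerPi_le hπ f g)

lemma normPi_sub_le (hπ : ∀ x, 0 < π x) (f g : Fin n → ℝ) :
    normPi π (f - g) ≤ normPi π f + normPi π g := by
  have hcross : -innerPi π f g ≤ normPi π f * normPi π g :=
    (neg_le_abs _).trans (abs_innerPi_le hπ f g)
  have hsq : innerPi π (f - g) (f - g) ≤ (normPi π f + normPi π g) ^ 2 := by
    rw [innerPi_sub_left, innerPi_sub_right, innerPi_sub_right, innerPi_comm g f,
      ← normPi_mul_self hπ f, ← normPi_mul_self hπ g]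
    nlinarith
  calc normPi π (f - g) ≤ √((normPi π f + normPi π g) ^ 2) := Real.sqrt_le_sqrt hsq
    _ = normPi π f + normPi π g :=
      Real.sqrt_sq (add_nonneg (normPi_nonneg f) (normPi_nonneg g))

end InnerPi

def IsStochastic (Q : Matrix (Fin n) (Fin n) ℝ) : Prop :=
  (∀ x y, 0 ≤ Q x y) ∧ ∀ x, ∑ y, Q x y = 1

def IsReversible (π : Fin n → ℝ) (Q : Matrix (Fin n) (Fin n) ℝ) : Prop :=
  ∀ x y, π x * Q x y = π y * Q y x

def IsSymmetricPi (π : Fin n → ℝ) (Q : Matrix (Fin n) (Fin n) ℝ) : Prop :=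
  ∀ f g, innerPi π f (Q *ᵥ g) = innerPi π (Q *ᵥ f) g

def IsContractionPi (π : Fin n → ℝ) (Q : Matrix (Fin n) (Fin n) ℝ) : Prop :=
  ∀ f, innerPi π (Q *ᵥ f) (Q *ᵥ f) ≤ innerPi π f f

def PreservesMeanPi (π : Fin n → ℝ) (Q : Matrix (Fin n) (Fin n) ℝ) : Prop :=
  ∀ f, ∑ x, π x * (Q *ᵥ f) x = ∑ x, π x * f x

section Operators

variable {Q R : Matrix (Fin n) (Fin n) ℝ}

lemma IsReversible.isSymmetricPi (h : IsReversible π Q) : IsSymmetricPi π Q := by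
  intro f g
  simp only [innerPi, mulVec, dotProduct, Finset.mul_sum, Finset.sum_mul]
  rw [Finset.sum_comm]
  refine Finset.sum_congr rfl fun y _ => Finset.sum_congr rfl fun x _ => ?_
  linear_combination (f x * g y) * h x y

lemma IsReversible.sum_mul_apply (h : IsReversible π Q) (hrow : ∀ x, ∑ y, Q x y = 1)
    (y : Fin n) : ∑ x, π x * Q x y = π y := by
  simp only [h _ y, ← Finset.mul_sum, hrow, mul_one]

lemma IsReversible.preservesMeanPi (h : IsReversible π Q) (hrow : ∀ x, ∑ y, Q x y = 1) :
    PreservesMeanPi π Q := by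
  intro f
  simp only [mulVec, dotProduct, Finset.mul_sum, ← mul_assoc]
  rw [Finset.sum_comm]
  simp only [← Finset.sum_mul, h.sum_mul_apply hrow]

/-- Jensen's inequality `(Qf)² ≤ Q(f²)` row by row, then stationarity of `π`. -/
lemma IsReversible.isContractionPi (hπ : ∀ x, 0 < π x) (hQ : IsStochastic Q)
    (h : IsReversible π Q) : IsContractionPi π Q := by
  intro f
  have jensen : ∀ x, (Q *ᵥ f) x ^ 2 ≤ ∑ y, Q x y * (f y * f y) := fun x => by
    have := Finset.sum_sq_le_sum_mul_sum_of_sq_le_mul Finset.univ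
      (fun y _ => hQ.1 x y) (fun y _ => mul_nonneg (hQ.1 x y) (mul_self_nonneg (f y)))
      (r := fun y => Q x y * f y) (fun y _ => le_of_eq (by ring))
    rwa [hQ.2, one_mul] at this
  calc innerPi π (Q *ᵥ f) (Q *ᵥ f) ≤ ∑ x, π x * ∑ y, Q x y * (f y * f y) :=
        Finset.sum_le_sum fun x _ => by
          rw [mul_assoc, ← sq]; exact mul_le_mul_of_nonneg_left (jensen x) (hπ x).le
    _ = innerPi π f f := by
        simp only [innerPi, Finset.mul_sum, ← mul_assoc]
        rw [Finset.sum_comm]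
        simp only [mul_assoc _ (f _), ← Finset.sum_mul, h.sum_mul_apply hQ.2]

lemma IsSymmetricPi.pow (h : IsSymmetricPi π Q) (t : ℕ) : IsSymmetricPi π (Q ^ t) := by
  induction t with
  | zero => simp [IsSymmetricPi]
  | succ t ih =>
    intro f g
    rw [pow_succ, ← mulVec_mulVec, ih, h, mulVec_mulVec, ← pow_succ', pow_succ]

lemma IsContractionPi.mul (hQ : IsContractionPi π Q) (hR : IsContractionPi π R) :
    IsContractionPi π (Q * R) := fun f => by
  rw [← mulVec_mulVec]; exact (hQ _).trans (hR f)

lemma IsContractionPi.pow (h : IsContractionPi π Q) (t : ℕ) : IsContractionPi π (Q ^ t) := by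
  induction t with
  | zero => simp [IsContractionPi]
  | succ t ih => rw [pow_succ]; exact ih.mul h

lemma PreservesMeanPi.pow (h : PreservesMeanPi π Q) (t : ℕ) : PreservesMeanPi π (Q ^ t) := by
  induction t with
  | zero => simp [PreservesMeanPi]
  | succ t ih => intro f; rw [pow_succ, ← mulVec_mulVec, ih, h]

lemma IsContractionPi.normPi_mulVec_le (h : IsContractionPi π Q) (f : Fin n → ℝ) :
    normPi π (Q *ᵥ f) ≤ normPi π f :=
  Real.sqrt_le_sqrt (h f)

end Operators

section Rho

variable {Q : Matrix (Fin n) (Fin n) ℝ}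

lemma rho_nonneg (hπ : ∀ x, 0 < π x) (Q : Matrix (Fin n) (Fin n) ℝ) : 0 ≤ rho π Q :=
  Real.sSup_nonneg fun _ ⟨f, _, _, hr⟩ =>
    hr ▸ div_nonneg (abs_nonneg _) (innerPi_self_nonneg hπ f)

lemma rho_le (hπ : ∀ x, 0 < π x) {a : ℝ} (ha : 0 ≤ a)
    (h : ∀ f : Fin n → ℝ, f ≠ 0 → ∑ x, π x * f x = 0 →
      |innerPi π f (Q *ᵥ f)| ≤ a * innerPi π f f) :
    rho π Q ≤ a := by
  refine Real.sSup_le ?_ ha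
  rintro r ⟨f, hf, hmean, rfl⟩
  rw [div_le_iff₀ (innerPi_self_pos hπ hf)]
  exact h f hf hmean

lemma IsContractionPi.bddAbove_rho (hπ : ∀ x, 0 < π x) (hQ : IsContractionPi π Q) :
    BddAbove {r : ℝ | ∃ f : Fin n → ℝ, f ≠ 0 ∧ (∑ x, π x * f x) = 0 ∧
      r = |innerPi π f (Q *ᵥ f)| / innerPi π f f} := by
  refine ⟨1, ?_⟩
  rintro r ⟨f, hf, -, rfl⟩
  rw [div_le_one (innerPi_self_pos hπ hf), ← normPi_mul_self hπ]
  exact (abs_innerPi_le hπ f _).trans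
    (mul_le_mul_of_nonneg_left (hQ.normPi_mulVec_le f) (normPi_nonneg _))

lemma IsContractionPi.abs_innerPi_le_rho (hπ : ∀ x, 0 < π x) (hQ : IsContractionPi π Q)
    {f : Fin n → ℝ} (hmean : ∑ x, π x * f x = 0) :
    |innerPi π f (Q *ᵥ f)| ≤ rho π Q * innerPi π f f := by
  rcases eq_or_ne f 0 with rfl | hf
  · simp [innerPi]
  · rw [← div_le_iff₀ (innerPi_self_pos hπ hf)]
    exact le_csSup (hQ.bddAbove_rho hπ) ⟨f, hf, hmean, rfl⟩

/-- Polarization: `4⟨u, Qv⟩ = ⟨u+v, Q(u+v)⟩ - ⟨u-v, Q(u-v)⟩` for symmetric `Q`. -/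
lemma two_mul_abs_innerPi_le_rho (hπ : ∀ x, 0 < π x) (hsymm : IsSymmetricPi π Q)
    (hQ : IsContractionPi π Q) {u v : Fin n → ℝ}
    (hu : ∑ x, π x * u x = 0) (hv : ∑ x, π x * v x = 0) :
    2 * |innerPi π u (Q *ᵥ v)| ≤ rho π Q * (innerPi π u u + innerPi π v v) := by
  have hmean_add : ∑ x, π x * (u + v) x = 0 := by
    simp only [Pi.add_apply, mul_add, Finset.sum_add_distrib, hu, hv, add_zero]
  have hmean_sub : ∑ x, π x * (u - v) x = 0 := by
    simp only [Pi.sub_apply, mul_sub, Finset.sum_sub_distrib, hu, hv, sub_zero]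
  have hvu : innerPi π v (Q *ᵥ u) = innerPi π u (Q *ᵥ v) := by
    rw [hsymm, innerPi_comm]
  have polar : 4 * innerPi π u (Q *ᵥ v) =
      innerPi π (u + v) (Q *ᵥ (u + v)) - innerPi π (u - v) (Q *ᵥ (u - v)) := by
    simp only [mulVec_add, mulVec_sub, innerPi_add_left, innerPi_add_right,
      innerPi_sub_left, innerPi_sub_right, hvu]
    ring
  have parallelogram : innerPi π (u + v) (u + v) + innerPi π (u - v) (u - v) =
      2 * (innerPi π u u + innerPi π v v) := by
    simp only [innerPi_add_left, innerPi_add_right, innerPi_sub_left, innerPi_sub_right,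
      innerPi_comm v u]
    ring
  have h4 : 4 * |innerPi π u (Q *ᵥ v)| ≤ rho π Q * (2 * (innerPi π u u + innerPi π v v)) := by
    calc 4 * |innerPi π u (Q *ᵥ v)| = |4 * innerPi π u (Q *ᵥ v)| := by
          rw [abs_mul, abs_of_pos (by norm_num : (0 : ℝ) < 4)]
      _ ≤ |innerPi π (u + v) (Q *ᵥ (u + v))| + |innerPi π (u - v) (Q *ᵥ (u - v))| := by
          rw [polar]; exact abs_sub _ _
      _ ≤ rho π Q * innerPi π (u + v) (u + v) + rho π Q * innerPi π (u - v) (u - v) :=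
          add_le_add (hQ.abs_innerPi_le_rho hπ hmean_add) (hQ.abs_innerPi_le_rho hπ hmean_sub)
      _ = rho π Q * (2 * (innerPi π u u + innerPi π v v)) := by rw [← parallelogram]; ring
  linarith

/-- Apply the polarization bound to `‖v‖ • u` and `‖u‖ • v`. -/
lemma abs_innerPi_le_rho_mul_normPi (hπ : ∀ x, 0 < π x) (hsymm : IsSymmetricPi π Q)
    (hQ : IsContractionPi π Q) {u v : Fin n → ℝ}
    (hu : ∑ x, π x * u x = 0) (hv : ∑ x, π x * v x = 0) :
    |innerPi π u (Q *ᵥ v)| ≤ rho π Q * (normPi π u * normPi π v) := by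
  have hsmul : ∀ (c : ℝ) (w : Fin n → ℝ), ∑ x, π x * w x = 0 → ∑ x, π x * (c • w) x = 0 :=
    fun c w hw => by
      simp only [Pi.smul_apply, smul_eq_mul, mul_left_comm (π _) c, ← Finset.mul_sum, hw,
        mul_zero]
  have hscaled := two_mul_abs_innerPi_le_rho hπ hsymm hQ
    (hsmul (normPi π v) u hu) (hsmul (normPi π u) v hv)
  simp only [mulVec_smul, innerPi_smul_left, innerPi_smul_right, abs_mul,
    abs_of_nonneg (normPi_nonneg _), ← normPi_mul_self hπ u, ← normPi_mul_self hπ v] at hscaled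
  have hcs : |innerPi π u (Q *ᵥ v)| ≤ normPi π u * normPi π v :=
    (abs_innerPi_le hπ u _).trans
      (mul_le_mul_of_nonneg_left (hQ.normPi_mulVec_le v) (normPi_nonneg _))
  rcases (mul_nonneg (normPi_nonneg u) (normPi_nonneg v)).eq_or_lt with h0 | hpos
  · rw [← h0] at hcs ⊢
    linarith [abs_nonneg (innerPi π u (Q *ᵥ v))]
  · refine le_of_mul_le_mul_left ?_ (mul_pos two_pos hpos)
    linear_combination hscaled

end Rho

section OperatorNorm

variable {Q R : Matrix (Fin n) (Fin n) ℝ}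

noncomputable def opNormPi (π : Fin n → ℝ) (Q : Matrix (Fin n) (Fin n) ℝ) : ℝ :=
  sSup {r : ℝ | ∃ f : Fin n → ℝ, f ≠ 0 ∧ r = normPi π (Q *ᵥ f) / normPi π f}

lemma opNormPi_nonneg : 0 ≤ opNormPi π Q :=
  Real.sSup_nonneg fun _ ⟨_, _, hr⟩ => hr ▸ div_nonneg (normPi_nonneg _) (normPi_nonneg _)

lemma normPi_mulVec_le_opNormPi (hπ : ∀ x, 0 < π x) {C : ℝ}
    (hC : ∀ f, normPi π (Q *ᵥ f) ≤ C * normPi π f) (f : Fin n → ℝ) :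
    normPi π (Q *ᵥ f) ≤ opNormPi π Q * normPi π f := by
  rcases eq_or_ne f 0 with rfl | hf
  · simp [normPi]
  have hbdd : BddAbove {r : ℝ | ∃ f : Fin n → ℝ, f ≠ 0 ∧
      r = normPi π (Q *ᵥ f) / normPi π f} := by
    refine ⟨C, ?_⟩
    rintro r ⟨g, hg, rfl⟩
    exact (div_le_iff₀ (normPi_pos hπ hg)).mpr (hC g)
  rw [← div_le_iff₀ (normPi_pos hπ hf)]
  exact le_csSup hbdd ⟨f, hf, rfl⟩

lemma IsContractionPi.normPi_sub_mulVec_le (hπ : ∀ x, 0 < π x) (hQ : IsContractionPi π Q)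
    (hR : IsContractionPi π R) (f : Fin n → ℝ) :
    normPi π ((Q - R) *ᵥ f) ≤ 2 * normPi π f := by
  rw [sub_mulVec, two_mul]
  exact (normPi_sub_le hπ _ _).trans
    (add_le_add (hQ.normPi_mulVec_le f) (hR.normPi_mulVec_le f))

lemma normPi_pow_mulVec_le {θ : ℝ} (hθ : 0 ≤ θ) (hQ : ∀ f, normPi π (Q *ᵥ f) ≤ θ * normPi π f)
    (t : ℕ) (f : Fin n → ℝ) : normPi π ((Q ^ t) *ᵥ f) ≤ θ ^ t * normPi π f := by
  induction t generalizing f with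
  | zero => simp
  | succ t ih =>
    rw [pow_succ, ← mulVec_mulVec, pow_succ, mul_assoc]
    exact (ih _).trans (mul_le_mul_of_nonneg_left (hQ f) (pow_nonneg hθ t))

end OperatorNorm

section Sandwich

variable {A B P : Matrix (Fin n) (Fin n) ℝ}

lemma IsSymmetricPi.innerPi_mul_mul_mulVec (hA : IsSymmetricPi π A) (f : Fin n → ℝ) :
    innerPi π f ((A * P * A) *ᵥ f) = innerPi π (A *ᵥ f) (P *ᵥ (A *ᵥ f)) := by
  rw [← mulVec_mulVec, ← mulVec_mulVec, hA]

lemma abs_innerPi_add_mulVec_add_le (hπ : ∀ x, 0 < π x) (hsymm : IsSymmetricPi π P)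
    (hP : IsContractionPi π P) {g d : Fin n → ℝ}
    (hg : ∑ x, π x * g x = 0) (hd : ∑ x, π x * d x = 0) :
    |innerPi π (g + d) (P *ᵥ (g + d))| ≤ |innerPi π g (P *ᵥ g)|
      + rho π P * (2 * (normPi π g * normPi π d) + normPi π d * normPi π d) := by
  have hdg : innerPi π d (P *ᵥ g) = innerPi π g (P *ᵥ d) := by rw [hsymm, innerPi_comm]
  have hcross := abs_innerPi_le_rho_mul_normPi hπ hsymm hP hg hd
  have hdd := abs_innerPi_le_rho_mul_normPi hπ hsymm hP hd hd
  rw [mulVec_add, innerPi_add_left, innerPi_add_right, innerPi_add_right, hdg]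
  calc |innerPi π g (P *ᵥ g) + innerPi π g (P *ᵥ d) + (innerPi π g (P *ᵥ d) + innerPi π d (P *ᵥ d))|
      ≤ |innerPi π g (P *ᵥ g)| + |innerPi π g (P *ᵥ d)| + (|innerPi π g (P *ᵥ d)|
          + |innerPi π d (P *ᵥ d)|) :=
        (abs_add_le _ _).trans (add_le_add (abs_add_le _ _) (abs_add_le _ _))
    _ ≤ _ := by linarith

lemma rho_mul_mul_le (hπ : ∀ x, 0 < π x) (hA : IsSymmetricPi π A) (hAmean : PreservesMeanPi π A)
    (hB : IsSymmetricPi π B) (hBc : IsContractionPi π B) (hBmean : PreservesMeanPi π B)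
    (hP : IsSymmetricPi π P) (hPc : IsContractionPi π P) {ε : ℝ} (hε : 0 ≤ ε)
    (hAB : ∀ f, normPi π ((A - B) *ᵥ f) ≤ ε * normPi π f) :
    rho π (A * P * A) ≤ rho π (B * P * B) + rho π P * (2 * ε + ε ^ 2) := by
  refine rho_le hπ (add_nonneg (rho_nonneg hπ _)
    (mul_nonneg (rho_nonneg hπ _) (by positivity))) fun f _ hf => ?_
  have hBf : ∑ x, π x * (B *ᵥ f) x = 0 := (hBmean f).trans hf
  have hDf : ∑ x, π x * ((A - B) *ᵥ f) x = 0 := by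
    simp only [sub_mulVec, Pi.sub_apply, mul_sub, Finset.sum_sub_distrib, hAmean f, hBmean f,
      sub_self]
  have hsplit : A *ᵥ f = B *ᵥ f + (A - B) *ᵥ f := by rw [sub_mulVec]; abel
  have hg : normPi π (B *ᵥ f) ≤ normPi π f := hBc.normPi_mulVec_le f
  have hd := hAB f
  have hgd : normPi π (B *ᵥ f) * normPi π ((A - B) *ᵥ f) ≤ ε * innerPi π f f := by
    rw [← normPi_mul_self hπ, mul_left_comm]
    exact mul_le_mul hg hd (normPi_nonneg _) (normPi_nonneg _)
  have hdd : normPi π ((A - B) *ᵥ f) * normPi π ((A - B) *ᵥ f) ≤ ε ^ 2 * innerPi π f f := by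
    rw [← normPi_mul_self hπ, sq, mul_mul_mul_comm]
    exact mul_le_mul hd hd (normPi_nonneg _) (mul_nonneg hε (normPi_nonneg _))
  have hBPB := ((hBc.mul hPc).mul hBc).abs_innerPi_le_rho hπ hf
  rw [hB.innerPi_mul_mul_mulVec] at hBPB
  rw [hA.innerPi_mul_mul_mulVec, hsplit]
  refine (abs_innerPi_add_mulVec_add_le hπ hP hPc hBf hDf).trans ?_
  have hρ := rho_nonneg hπ P
  linarith [mul_le_mul_of_nonneg_left hgd hρ, mul_le_mul_of_nonneg_left hdd hρ]

lemma rho_mul_mul_le_rho_mul_mul (hπ : ∀ x, 0 < π x) (hA : IsSymmetricPi π A)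
    (hAc : IsContractionPi π A) (hB : IsSymmetricPi π B) (hBc : IsContractionPi π B)
    (hBmean : PreservesMeanPi π B) (hPc : IsContractionPi π P) (hAB : A * B = B) :
    rho π (B * P * B) ≤ rho π (A * P * A) := by
  refine rho_le hπ (rho_nonneg hπ _) fun f _ hf => ?_
  have hAg : A *ᵥ (B *ᵥ f) = B *ᵥ f := by rw [mulVec_mulVec, hAB]
  have hAPA := ((hAc.mul hPc).mul hAc).abs_innerPi_le_rho hπ ((hBmean f).trans hf)
  rw [hA.innerPi_mul_mul_mulVec, hAg] at hAPA
  rw [hB.innerPi_mul_mul_mulVec]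
  exact hAPA.trans (mul_le_mul_of_nonneg_left (hBc f) (rho_nonneg hπ _))

end Sandwich

lemma pow_mul_eq_of_mul_eq {M : Type*} [Monoid M] {a e : M} (h : a * e = e) (t : ℕ) :
    a ^ t * e = e := by
  induction t with
  | zero => rw [pow_zero, one_mul]
  | succ t ih => rw [pow_succ', mul_assoc, ih, h]

lemma sub_pow_of_mul_eq {R : Type*} [Ring R] {a e : R} (hae : a * e = e) (hea : e * a = e)
    (hee : e * e = e) {t : ℕ} (ht : 0 < t) : (a - e) ^ t = a ^ t - e := by
  induction t, ht using Nat.le_induction with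
  | base => rw [pow_one, pow_one]
  | succ t _ ih =>
    rw [pow_succ, ih, sub_mul, mul_sub, mul_sub, ← pow_succ, pow_mul_eq_of_mul_eq hae, hea, hee]
    abel

section Kernels

variable {k : ℕ} {part : Fin n → Fin k} {x y : Fin n}

lemma orbMass_pos (hπ : ∀ x, 0 < π x) (x : Fin n) : 0 < orbMass π part (part x) :=
  Finset.sum_pos' (fun z _ => (hπ z).le) ⟨x, by simp, hπ x⟩

lemma gibbsKer_apply_of_part_ne (h : part y ≠ part x) : gibbsKer π part x y = 0 := by
  simp [gibbsKer, h]

lemma gibbsKer_isStochastic (hπ : ∀ x, 0 < π x) : IsStochastic (gibbsKer π part) := by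
  refine ⟨fun x y => ?_, fun x => ?_⟩
  · simp only [gibbsKer, of_apply]
    split_ifs
    · exact div_nonneg (hπ y).le (orbMass_pos hπ x).le
    · exact le_rfl
  · simp only [gibbsKer, of_apply, ← Finset.sum_filter, ← Finset.sum_div]
    exact div_self (orbMass_pos hπ x).ne'

lemma gibbsKer_isReversible : IsReversible π (gibbsKer π part) := by
  intro x y
  by_cases h : part y = part x
  · simp only [gibbsKer, of_apply, h, if_true]
    ring
  · simp [gibbsKer, h, Ne.symm h]

lemma mhKer_apply_of_part_ne (h : part y ≠ part x) : mhKer π part x y = 0 := by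
  have hxy : x ≠ y := fun e => h (e ▸ rfl)
  simp [mhKer, hxy, h]

lemma mhKer_apply_of_ne_of_part_eq (hxy : x ≠ y) (h : part y = part x) :
    mhKer π part x y = min 1 (π y / π x) / ((orbCard part (part x) : ℝ) - 1) := by
  simp [mhKer, hxy, h]

lemma filter_ne_and_eq_eq_erase (x : Fin n) :
    Finset.univ.filter (fun z => z ≠ x ∧ part z = part x)
      = (Finset.univ.erase x).filter (fun z => part z = part x) := by
  ext z; simp [and_comm]

lemma sum_mhKer_erase (x : Fin n) :
    ∑ y ∈ Finset.univ.erase x, mhKer π part x y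
      = ∑ z ∈ Finset.univ.filter (fun z => z ≠ x ∧ part z = part x),
          min 1 (π z / π x) / ((orbCard part (part x) : ℝ) - 1) := by
  rw [filter_ne_and_eq_eq_erase, Finset.sum_filter]
  refine Finset.sum_congr rfl fun y hy => ?_
  split_ifs with h
  · exact mhKer_apply_of_ne_of_part_eq (Finset.ne_of_mem_erase hy).symm h
  · exact mhKer_apply_of_part_ne h

/-- The off-diagonal rates sum to at most `1`: there are `|O(x)| - 1` of them,
each at most `1 / (|O(x)| - 1)`. -/
lemma sum_mhKer_erase_le_one (x : Fin n) :
    ∑ y ∈ Finset.univ.erase x, mhKer π part x y ≤ 1 := by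
  set c : ℝ := (orbCard part (part x) : ℝ) - 1
  have hcard : ((Finset.univ.filter (fun z => z ≠ x ∧ part z = part x)).card : ℝ) = c := by
    have hmem : x ∈ Finset.univ.filter (fun z => part z = part x) := by simp
    rw [filter_ne_and_eq_eq_erase, Finset.filter_erase, Finset.card_erase_of_mem hmem,
      Nat.cast_sub (Finset.card_pos.mpr ⟨x, hmem⟩), Nat.cast_one]
    rfl
  have hc : 0 ≤ c := by rw [← hcard]; exact Nat.cast_nonneg _
  rw [sum_mhKer_erase]
  calc _ ≤ ∑ _z ∈ Finset.univ.filter (fun z => z ≠ x ∧ part z = part x), 1 / c :=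
        Finset.sum_le_sum fun z _ => div_le_div_of_nonneg_right (min_le_left _ _) hc
    _ = c * (1 / c) := by rw [Finset.sum_const, nsmul_eq_mul, hcard]
    _ ≤ 1 := by
        rcases hc.eq_or_lt with h0 | hpos
        · rw [← h0]; norm_num
        · rw [mul_one_div_cancel hpos.ne']

lemma mhKer_isStochastic (hπ : ∀ x, 0 < π x) : IsStochastic (mhKer π part) := by
  have hdiag : ∀ x, mhKer π part x x = 1 - ∑ y ∈ Finset.univ.erase x, mhKer π part x y :=
    fun x => by rw [sum_mhKer_erase]; simp [mhKer]
  refine ⟨fun x y => ?_, fun x => ?_⟩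
  · rcases eq_or_ne x y with rfl | hxy
    · rw [hdiag, sub_nonneg]; exact sum_mhKer_erase_le_one x
    by_cases h : part y = part x
    · rw [mhKer_apply_of_ne_of_part_eq hxy h]
      refine div_nonneg (le_min zero_le_one (div_nonneg (hπ y).le (hπ x).le)) ?_
      rw [sub_nonneg, Nat.one_le_cast]
      exact Finset.card_pos.mpr ⟨x, by simp⟩
    · rw [mhKer_apply_of_part_ne h]
  · rw [← Finset.add_sum_erase _ _ (Finset.mem_univ x), hdiag, sub_add_cancel]

/-- Both sides equal `min (π x) (π y) / (|O(x)| - 1)`. -/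
lemma mhKer_isReversible (hπ : ∀ x, 0 < π x) : IsReversible π (mhKer π part) := by
  intro x y
  rcases eq_or_ne x y with rfl | hxy
  · rfl
  by_cases h : part y = part x
  · rw [mhKer_apply_of_ne_of_part_eq hxy h, mhKer_apply_of_ne_of_part_eq hxy.symm h.symm, h,
      mul_div_assoc', mul_div_assoc', mul_min_of_nonneg _ _ (hπ x).le,
      mul_min_of_nonneg _ _ (hπ y).le, mul_div_cancel₀ _ (hπ x).ne',
      mul_div_cancel₀ _ (hπ y).ne', mul_one, mul_one, min_comm]
  · rw [mhKer_apply_of_part_ne h, mhKer_apply_of_part_ne (Ne.symm h), mul_zero, mul_zero]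

/-- Row `z` of `G` depends only on the orbit of `z`. -/
lemma mul_gibbsKer {A : Matrix (Fin n) (Fin n) ℝ} (hrow : ∀ x, ∑ y, A x y = 1)
    (hblock : ∀ x y, part y ≠ part x → A x y = 0) :
    A * gibbsKer π part = gibbsKer π part := by
  ext x y
  have hrow_const : ∀ z, A x z * gibbsKer π part z y = A x z * gibbsKer π part x y := by
    intro z
    by_cases h : part z = part x
    · simp only [gibbsKer, of_apply, h]
    · rw [hblock x z h, zero_mul, zero_mul]
  rw [mul_apply, Finset.sum_congr rfl fun z _ => hrow_const z, ← Finset.sum_mul, hrow, one_mul]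

lemma gibbsKer_mul {A : Matrix (Fin n) (Fin n) ℝ} (hrow : ∀ x, ∑ y, A x y = 1)
    (hrev : IsReversible π A) (hblock : ∀ x y, part y ≠ part x → A x y = 0) :
    gibbsKer π part * A = gibbsKer π part := by
  ext x y
  rw [mul_apply]
  by_cases hy : part y = part x
  · have hcol : ∀ z, gibbsKer π part x z * A z y = π y / orbMass π part (part x) * A y z := by
      intro z
      by_cases h : part z = part x
      · simp only [gibbsKer, of_apply, h, if_true]
        rw [div_mul_eq_mul_div, hrev z y, mul_div_right_comm]
      · rw [gibbsKer_apply_of_part_ne h, zero_mul, hblock y z (fun e => h (e.trans hy)), mul_zero]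
    rw [Finset.sum_congr rfl fun z _ => hcol z, ← Finset.mul_sum, hrow, mul_one]
    simp [gibbsKer, hy]
  · refine (Finset.sum_eq_zero fun z _ => ?_).trans (gibbsKer_apply_of_part_ne hy).symm
    by_cases h : part z = part x
    · rw [hblock z y (fun e => hy (e.trans h)), mul_zero]
    · rw [gibbsKer_apply_of_part_ne h, zero_mul]

lemma mhKer_mul_gibbsKer (hπ : ∀ x, 0 < π x) : mhKer π part * gibbsKer π part = gibbsKer π part :=
  mul_gibbsKer (mhKer_isStochastic hπ).2 fun _ _ => mhKer_apply_of_part_ne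

lemma gibbsKer_mul_mhKer (hπ : ∀ x, 0 < π x) : gibbsKer π part * mhKer π part = gibbsKer π part :=
  gibbsKer_mul (mhKer_isStochastic hπ).2 (mhKer_isReversible hπ) fun _ _ => mhKer_apply_of_part_ne

lemma gibbsKer_mul_self (hπ : ∀ x, 0 < π x) :
    gibbsKer π part * gibbsKer π part = gibbsKer π part :=
  mul_gibbsKer (gibbsKer_isStochastic hπ).2 fun _ _ => gibbsKer_apply_of_part_ne

lemma mhKer_sub_gibbsKer_pow (hπ : ∀ x, 0 < π x) {t : ℕ} (ht : 0 < t) :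
    (mhKer π part - gibbsKer π part) ^ t = mhKer π part ^ t - gibbsKer π part :=
  sub_pow_of_mul_eq (mhKer_mul_gibbsKer hπ) (gibbsKer_mul_mhKer hπ) (gibbsKer_mul_self hπ) ht

end Kernels

lemma tendsto_of_le_of_le_add_mul_pow {u : ℕ → ℝ} {a c θ : ℝ} (hθ0 : 0 ≤ θ) (hθ1 : θ < 1)
    (hlow : ∀ t, a ≤ u t) (hup : ∀ t, 1 ≤ t → u t ≤ a + c * (2 * θ ^ t + θ ^ (2 * t))) :
    Tendsto u atTop (𝓝 a) := by
  have hpow : Tendsto (fun t : ℕ => θ ^ t) atTop (𝓝 0) :=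
    tendsto_pow_atTop_nhds_zero_of_lt_one hθ0 hθ1
  have hbound : Tendsto (fun t : ℕ => a + c * (2 * θ ^ t + θ ^ (2 * t))) atTop (𝓝 a) := by
    simpa [pow_mul'] using
      tendsto_const_nhds.add (tendsto_const_nhds.mul ((hpow.const_mul 2).add (hpow.pow 2)))
  exact tendsto_of_tendsto_of_tendsto_of_le_of_le' tendsto_const_nhds hbound
    (Eventually.of_forall hlow) (eventually_atTop.mpr ⟨1, hup⟩)

end OrbitKernel

open OrbitKernel

theorem stmt7_general {n k : ℕ}
    (π : Fin n → ℝ) (hπpos : ∀ x, 0 < π x)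
    (part : Fin n → Fin k)
    (P : Matrix (Fin n) (Fin n) ℝ)
    (hPnonneg : ∀ x y, 0 ≤ P x y) (hProw : ∀ x, ∑ y, P x y = 1)
    (hPrev : ∀ x y, π x * P x y = π y * P y x)
    (θ : ℝ)
    (hθ : θ = sSup {r : ℝ | ∃ f : Fin n → ℝ, f ≠ 0 ∧
      r = normPi π ((mhKer π part - gibbsKer π part).mulVec f) / normPi π f}) :
    (∀ t : ℕ, 1 ≤ t →
        0 ≤ rho π (mhKer π part ^ t * P * mhKer π part ^ t)
              - rho π (gibbsKer π part * P * gibbsKer π part) ∧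
        rho π (mhKer π part ^ t * P * mhKer π part ^ t)
              - rho π (gibbsKer π part * P * gibbsKer π part)
            ≤ rho π P * (2 * θ ^ t + θ ^ (2 * t))) ∧
      (θ < 1 →
        Tendsto (fun t : ℕ => rho π (mhKer π part ^ t * P * mhKer π part ^ t)) atTop
          (𝓝 (rho π (gibbsKer π part * P * gibbsKer π part)))) := by
  set M := mhKer π part
  set G := gibbsKer π part
  have hM := mhKer_isStochastic (part := part) hπpos
  have hMrev := mhKer_isReversible (part := part) hπpos
  have hG := gibbsKer_isStochastic (part := part) hπpos
  have hGrev : IsReversible π G := gibbsKer_isReversible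
  have hMc := hMrev.isContractionPi hπpos hM
  have hGc := hGrev.isContractionPi hπpos hG
  have hPc := IsReversible.isContractionPi hπpos ⟨hPnonneg, hProw⟩ hPrev
  replace hθ : θ = opNormPi π (M - G) := hθ
  have hθ0 : 0 ≤ θ := hθ ▸ opNormPi_nonneg
  have hMG_le : ∀ f, normPi π ((M - G) *ᵥ f) ≤ θ * normPi π f :=
    hθ ▸ normPi_mulVec_le_opNormPi hπpos (hMc.normPi_sub_mulVec_le hπpos hGc)
  have upper : ∀ t, 1 ≤ t → rho π (M ^ t * P * M ^ t)
      ≤ rho π (G * P * G) + rho π P * (2 * θ ^ t + θ ^ (2 * t)) := fun t ht => by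
    rw [mul_comm 2 t, pow_mul]
    refine rho_mul_mul_le hπpos (hMrev.isSymmetricPi.pow t) ((hMrev.preservesMeanPi hM.2).pow t)
      hGrev.isSymmetricPi hGc (hGrev.preservesMeanPi hG.2) (IsReversible.isSymmetricPi hPrev) hPc
      (pow_nonneg hθ0 t) fun f => ?_
    rw [← mhKer_sub_gibbsKer_pow hπpos ht]
    exact normPi_pow_mulVec_le hθ0 hMG_le t f
  have lower : ∀ t, rho π (G * P * G) ≤ rho π (M ^ t * P * M ^ t) := fun t =>
    rho_mul_mul_le_rho_mul_mul hπpos (hMrev.isSymmetricPi.pow t) (hMc.pow t) hGrev.isSymmetricPi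
      hGc (hGrev.preservesMeanPi hG.2) hPc (pow_mul_eq_of_mul_eq (mhKer_mul_gibbsKer hπpos) t)
  exact ⟨fun t ht => ⟨sub_nonneg.mpr (lower t), sub_le_iff_le_add'.mpr (upper t ht)⟩,
    fun hθ1 => tendsto_of_le_of_le_add_mul_pow hθ0 hθ1 lower upper⟩

/-- with `θ` the `π`-operator norm of `M − G`, for every `t ≥ 1` we have
`0 ≤ ρ(MᵗPMᵗ) − ρ(GPG) ≤ ρ(P)(2θᵗ + θ^{2t})`; in particular if `θ < 1` then
`ρ(MᵗPMᵗ) → ρ(GPG)` as `t → ∞`. -/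
theorem stmt7 {n k : ℕ} (hn : 0 < n)
    (π : Fin n → ℝ) (hπpos : ∀ x, 0 < π x) (hπsum : ∑ x, π x = 1)
    (part : Fin n → Fin k) (hpart : Function.Surjective part)
    (P : Matrix (Fin n) (Fin n) ℝ)
    (hPnonneg : ∀ x y, 0 ≤ P x y) (hProw : ∀ x, ∑ y, P x y = 1)
    (hPrev : ∀ x y, π x * P x y = π y * P y x)
    (θ : ℝ)
    (hθ : θ = sSup {r : ℝ | ∃ f : Fin n → ℝ, f ≠ 0 ∧
      r = normPi π ((mhKer π part - gibbsKer π part).mulVec f) / normPi π f}) :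
    (∀ t : ℕ, 1 ≤ t →
        0 ≤ rho π (mhKer π part ^ t * P * mhKer π part ^ t)
              - rho π (gibbsKer π part * P * gibbsKer π part) ∧
        rho π (mhKer π part ^ t * P * mhKer π part ^ t)
              - rho π (gibbsKer π part * P * gibbsKer π part)
            ≤ rho π P * (2 * θ ^ t + θ ^ (2 * t))) ∧
      (θ < 1 →
        Tendsto (fun t : ℕ => rho π (mhKer π part ^ t * P * mhKer π part ^ t)) atTop
          (𝓝 (rho π (gibbsKer π part * P * gibbsKer π part)))) :=
  stmt7_general π hπpos part P hPnonneg hProw hPrev θ hθ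
end

section
/- Let Q be a π-stationary stochastic matrix. Then G·Q·G = Q if and only if there exist nonnegative reals c_{ij} (i,j ∈ {1,…,k}) with Σ_{j=1}^k c_{ij} = 1 for every i and Σ_{i=1}^k π(O_i)·c_{ij} = π(O_j) for every j, such that Q(x,y) = c_{ij}·π(y)/π(O_j) whenever x ∈ O_i and y ∈ O_j. -/
open Matrix Finset

/-- characterisation of the `π`-stationary stochastic matrices fixed by
the map `Q ↦ GQG`. -/
theorem stmt10 {n k : ℕ} (hn : 0 < n)
    (π : Fin n → ℝ) (hπpos : ∀ x, 0 < π x) (hπsum : ∑ x, π x = 1)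
    (part : Fin n → Fin k) (hpart : Function.Surjective part)
    (Q : Matrix (Fin n) (Fin n) ℝ)
    (hQnonneg : ∀ x y, 0 ≤ Q x y) (hQrow : ∀ x, ∑ y, Q x y = 1)
    (hQstat : ∀ y, ∑ x, π x * Q x y = π y) :
    gibbsKer π part * Q * gibbsKer π part = Q ↔
      ∃ c : Fin k → Fin k → ℝ,
        (∀ i j, 0 ≤ c i j) ∧
        (∀ i, ∑ j, c i j = 1) ∧
        (∀ j, ∑ i, orbMass π part i * c i j = orbMass π part j) ∧
        (∀ x y : Fin n, Q x y = c (part x) (part y) * (π y / orbMass π part (part y))) := by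
  have hMpos : ∀ i, 0 < orbMass π part i := orbMass_pos π hπpos part hpart
  have horb : ∀ i : Fin k, (∑ z ∈ univ.filter (fun z => part z = i), π z) = orbMass π part i :=
    fun _ => rfl
  have hGQ : ∀ x y, (gibbsKer π part * Q) x y
      = (∑ u ∈ univ.filter (fun u => part u = part x), π u * Q u y) / orbMass π part (part x) := by
    intro x y
    rw [Matrix.mul_apply, Finset.sum_div, Finset.sum_filter]
    refine Finset.sum_congr rfl fun u _ => ?_
    simp only [gibbsKer, Matrix.of_apply]
    by_cases h : part u = part x <;> simp [h, div_mul_eq_mul_div]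
  have hQG : ∀ (R : Matrix (Fin n) (Fin n) ℝ) x y, (R * gibbsKer π part) x y
      = (∑ v ∈ univ.filter (fun v => part v = part y), R x v) * (π y / orbMass π part (part y)) := by
    intro R x y
    rw [Matrix.mul_apply, Finset.sum_mul, Finset.sum_filter]
    refine Finset.sum_congr rfl fun v _ => ?_
    simp only [gibbsKer, Matrix.of_apply]
    by_cases h : part v = part y
    · rw [h]; simp
    · rw [if_neg (fun h' => h h'.symm), if_neg h, mul_zero]
  constructor
  · intro h
    refine ⟨fun i j => (∑ u ∈ univ.filter (fun u => part u = i), π u *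
        ∑ v ∈ univ.filter (fun v => part v = j), Q u v) / orbMass π part i, ?_, ?_, ?_, ?_⟩
    · intro i j
      apply div_nonneg _ (hMpos i).le
      exact Finset.sum_nonneg fun u _ =>
        mul_nonneg (hπpos u).le (Finset.sum_nonneg fun v _ => hQnonneg u v)
    · intro i
      rw [← Finset.sum_div, div_eq_one_iff_eq (hMpos i).ne']
      rw [Finset.sum_comm]
      calc ∑ u ∈ univ.filter (fun u => part u = i), ∑ j, π u *
              ∑ v ∈ univ.filter (fun v => part v = j), Q u v
          = ∑ u ∈ univ.filter (fun u => part u = i), π u := by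
            refine Finset.sum_congr rfl fun u _ => ?_
            rw [← Finset.mul_sum, Finset.sum_fiberwise, hQrow, mul_one]
        _ = orbMass π part i := rfl
    · intro j
      have hmd : ∀ i, orbMass π part i * ((∑ u ∈ univ.filter (fun u => part u = i), π u *
          ∑ v ∈ univ.filter (fun v => part v = j), Q u v) / orbMass π part i)
          = ∑ u ∈ univ.filter (fun u => part u = i), π u *
            ∑ v ∈ univ.filter (fun v => part v = j), Q u v := fun i =>
        mul_div_cancel₀ _ (hMpos i).ne'
      simp only [hmd]
      rw [Finset.sum_fiberwise]
      calc ∑ u, π u * ∑ v ∈ univ.filter (fun v => part v = j), Q u v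
          = ∑ v ∈ univ.filter (fun v => part v = j), ∑ u, π u * Q u v := by
            simp_rw [Finset.mul_sum]; rw [Finset.sum_comm]
        _ = orbMass π part j := Finset.sum_congr rfl fun v _ => hQstat v
    · intro x y
      conv_lhs => rw [← h]
      rw [hQG]
      show _ = (∑ u ∈ univ.filter (fun u => part u = part x), π u *
          ∑ v ∈ univ.filter (fun v => part v = part y), Q u v) / orbMass π part (part x) *
          (π y / orbMass π part (part y))
      congr 1
      calc ∑ v ∈ univ.filter (fun v => part v = part y), (gibbsKer π part * Q) x v
          = ∑ v ∈ univ.filter (fun v => part v = part y),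
              (∑ u ∈ univ.filter (fun u => part u = part x), π u * Q u v)
                / orbMass π part (part x) := Finset.sum_congr rfl fun v _ => hGQ x v
        _ = (∑ u ∈ univ.filter (fun u => part u = part x), π u *
              ∑ v ∈ univ.filter (fun v => part v = part y), Q u v) / orbMass π part (part x) := by
            rw [← Finset.sum_div]
            congr 1
            rw [Finset.sum_comm]
            exact Finset.sum_congr rfl fun u _ => (Finset.mul_sum _ _ _).symm
  · rintro ⟨c, hc0, hcrow, hccol, hQform⟩
    have hGQeq : gibbsKer π part * Q = Q := by
      ext x y
      rw [hGQ]
      calc (∑ u ∈ univ.filter (fun u => part u = part x), π u * Q u y) / orbMass π part (part x)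
          = (∑ u ∈ univ.filter (fun u => part u = part x), π u) *
              (c (part x) (part y) * (π y / orbMass π part (part y))) / orbMass π part (part x) := by
            rw [Finset.sum_mul]
            congr 1
            refine Finset.sum_congr rfl fun u hu => ?_
            rw [hQform u y, (Finset.mem_filter.mp hu).2]
        _ = Q x y := by
            rw [horb, hQform x y]
            exact mul_div_cancel_left₀ _ (hMpos (part x)).ne'
    have hQGeq : Q * gibbsKer π part = Q := by
      ext x y
      rw [hQG]
      calc (∑ v ∈ univ.filter (fun v => part v = part y), Q x v) * (π y / orbMass π part (part y))
          = (c (part x) (part y) * ((∑ v ∈ univ.filter (fun v => part v = part y), π v)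
              / orbMass π part (part y))) * (π y / orbMass π part (part y)) := by
            congr 1
            rw [Finset.sum_div, Finset.mul_sum]
            refine Finset.sum_congr rfl fun v hv => ?_
            rw [hQform x v, (Finset.mem_filter.mp hv).2]
        _ = Q x y := by
            rw [horb, div_self (hMpos (part y)).ne', mul_one, hQform x y]
    rw [hGQeq, hQGeq]
end

section
/- Let P be a π-stationary stochastic matrix, and let Q be a π-stationary stochastic matrix with G·Q·G = Q and Q(x,y) > 0 for all x, y. Then the Pythagorean identity D^π(P‖Q) = D^π(P‖GPG) + D^π(GPG‖Q) holds. In particular, taking Q = Π, one has D^π(P‖Π) ≥ D^π(GPG‖Π), so GPG is the unique information projection of P onto the set {Q π-stationary : GQG = Q} under the KL divergence. -/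
open Matrix Finset

/-- The `μ`-weighted KL divergence between two kernels.  (When `P x y = 0` the whole
summand vanishes, which implements the convention `0·log(0/a) = 0`.) -/
noncomputable def klDiv {m : ℕ} (μ : Fin m → ℝ) (P Q : Matrix (Fin m) (Fin m) ℝ) : ℝ :=
  ∑ x, ∑ y, μ x * P x y * Real.log (P x y / Q x y)

/-! Both `GPG` and every `Q` with `GQG = Q` have entries of the form `c (O x) (O y) * π y`, so
`log (GPG / Q)` is constant on pairs of orbits. Since `G` is `π`-reversible and averages over
orbits, an orbit-constant function has the same `π ⊗ P`- and `π ⊗ GPG`-integral; splitting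
`log (P / Q) = log (P / GPG) + log (GPG / Q)` gives the identity. The inequalities and the
uniqueness then follow from Gibbs' inequality `D^π ≥ 0`, with equality only for equal kernels;
`Π` is `G`-invariant because `π` is `G`-stationary. -/

open InformationTheory (klFun klFun_apply klFun_nonneg klFun_eq_zero_iff)

section KullbackLeibler

variable {m : ℕ} {μ : Fin m → ℝ} {A B : Matrix (Fin m) (Fin m) ℝ}

lemma mul_log_div_eq_mul_klFun_add {a b : ℝ} (hab : b = 0 → a = 0) :
    a * Real.log (a / b) = b * klFun (a / b) + (a - b) := by
  rcases eq_or_ne b 0 with rfl | hb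
  · simp [hab rfl]
  · rw [klFun_apply]
    field_simp
    ring

lemma klDiv_eq_sum_mul_klFun (hArow : ∀ x, ∑ y, A x y = 1) (hBrow : ∀ x, ∑ y, B x y = 1)
    (hAB : ∀ x y, B x y = 0 → A x y = 0) :
    klDiv μ A B = ∑ x, ∑ y, μ x * B x y * klFun (A x y / B x y) := by
  have hrow (x : Fin m) : ∑ y, μ x * (A x y - B x y) = 0 := by
    rw [← mul_sum, sum_sub_distrib, hArow, hBrow, sub_self, mul_zero]
  calc klDiv μ A B
      = ∑ x, ∑ y, (μ x * B x y * klFun (A x y / B x y) + μ x * (A x y - B x y)) := by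
        refine sum_congr rfl fun x _ => sum_congr rfl fun y _ => ?_
        rw [mul_assoc, mul_log_div_eq_mul_klFun_add (hAB x y)]
        ring
    _ = _ := by simp only [sum_add_distrib, hrow, add_zero]

lemma klDiv_nonneg (hμ : ∀ x, 0 ≤ μ x) (hA : A ∈ rowStochastic ℝ (Fin m))
    (hB : B ∈ rowStochastic ℝ (Fin m)) (hAB : ∀ x y, B x y = 0 → A x y = 0) :
    0 ≤ klDiv μ A B := by
  rw [klDiv_eq_sum_mul_klFun (sum_row_of_mem_rowStochastic hA)
    (sum_row_of_mem_rowStochastic hB) hAB]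
  exact sum_nonneg fun x _ => sum_nonneg fun y _ =>
    mul_nonneg (mul_nonneg (hμ x) (hB.1 x y))
      (klFun_nonneg (div_nonneg (hA.1 x y) (hB.1 x y)))

lemma eq_of_klDiv_eq_zero (hμ : ∀ x, 0 < μ x) (hA : A ∈ rowStochastic ℝ (Fin m))
    (hBrow : ∀ x, ∑ y, B x y = 1) (hBpos : ∀ x y, 0 < B x y) (h : klDiv μ A B = 0) :
    A = B := by
  rw [klDiv_eq_sum_mul_klFun (sum_row_of_mem_rowStochastic hA) hBrow
    fun x y hB => absurd hB (hBpos x y).ne'] at h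
  have hterm_nonneg (x y : Fin m) : 0 ≤ μ x * B x y * klFun (A x y / B x y) :=
    mul_nonneg (mul_pos (hμ x) (hBpos x y)).le
      (klFun_nonneg (div_nonneg (hA.1 x y) (hBpos x y).le))
  ext x y
  have hterm : μ x * B x y * klFun (A x y / B x y) = 0 :=
    (sum_eq_zero_iff_of_nonneg fun y _ => hterm_nonneg x y).1
      ((sum_eq_zero_iff_of_nonneg fun x _ => sum_nonneg fun y _ => hterm_nonneg x y).1 h x
        (mem_univ x)) y (mem_univ y)
  have hkl : klFun (A x y / B x y) = 0 :=
    (mul_eq_zero.1 hterm).resolve_left (mul_pos (hμ x) (hBpos x y)).ne'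
  exact (div_eq_one_iff_eq (hBpos x y).ne').1
    ((klFun_eq_zero_iff (div_nonneg (hA.1 x y) (hBpos x y).le)).1 hkl)

end KullbackLeibler

lemma mul_mul_apply_le {ι : Type*} [Fintype ι] {A M B : Matrix ι ι ℝ}
    (hA : ∀ i j, 0 ≤ A i j) (hM : ∀ i j, 0 ≤ M i j) (hB : ∀ i j, 0 ≤ B i j) (x y : ι) :
    A x x * M x y * B y y ≤ (A * M * B) x y := by
  have hAM : A x x * M x y ≤ (A * M) x y :=
    single_le_sum (f := fun a => A x a * M a y) (fun a _ => mul_nonneg (hA x a) (hM a y))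
      (mem_univ x)
  calc A x x * M x y * B y y ≤ (A * M) x y * B y y := by gcongr; exact hB y y
    _ ≤ (A * M * B) x y :=
      single_le_sum (f := fun b => (A * M) x b * B b y)
        (fun b _ => mul_nonneg (sum_nonneg fun a _ => mul_nonneg (hA x a) (hM a b)) (hB b y))
        (mem_univ y)

section GibbsKernel

variable {n k : ℕ} {π : Fin n → ℝ} {part : Fin n → Fin k}

lemma orbMass_part_pos (hπ : ∀ x, 0 < π x) (x : Fin n) : 0 < orbMass π part (part x) :=
  sum_pos (fun z _ => hπ z) ⟨x, by simp⟩

lemma gibbsKer_self_pos (hπ : ∀ x, 0 < π x) (x : Fin n) : 0 < gibbsKer π part x x := by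
  simpa [gibbsKer] using div_pos (hπ x) (orbMass_part_pos hπ x)

lemma gibbsKer_mem_rowStochastic (hπ : ∀ x, 0 < π x) :
    gibbsKer π part ∈ rowStochastic ℝ (Fin n) := by
  refine mem_rowStochastic_iff_sum.2 ⟨fun x y => ?_, fun x => ?_⟩
  · simp only [gibbsKer, of_apply]
    split_ifs
    exacts [div_nonneg (hπ y).le (orbMass_part_pos hπ x).le, le_rfl]
  · simp only [gibbsKer, of_apply]
    rw [← sum_filter, ← sum_div]
    exact div_self (orbMass_part_pos hπ x).ne'

lemma mul_gibbsKer_apply_comm (x y : Fin n) :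
    π x * gibbsKer π part x y = π y * gibbsKer π part y x := by
  simp only [gibbsKer, of_apply]
  split_ifs with hyx hxy hxy
  · rw [hyx]; ring
  · exact absurd hyx.symm hxy
  · exact absurd hxy.symm hyx
  · ring

lemma sum_gibbsKer_mul_of_congr (hπ : ∀ x, 0 < π x) {f : Fin n → ℝ}
    (hf : ∀ x x', part x = part x' → f x = f x') (a : Fin n) :
    ∑ x, gibbsKer π part a x * f x = f a := by
  calc ∑ x, gibbsKer π part a x * f x = ∑ x, gibbsKer π part a x * f a := by
        refine sum_congr rfl fun x _ => ?_
        by_cases h : part x = part a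
        · rw [hf x a h]
        · simp [gibbsKer, h]
    _ = f a := by
        rw [← sum_mul, sum_row_of_mem_rowStochastic (gibbsKer_mem_rowStochastic hπ), one_mul]

lemma const_mul_gibbsKer (hπ : ∀ x, 0 < π x) {ι : Type*} :
    (of fun _ y => π y : Matrix ι (Fin n) ℝ) * gibbsKer π part = of fun _ y => π y := by
  ext x y
  simp only [mul_apply, of_apply, mul_gibbsKer_apply_comm _ y, ← mul_sum,
    sum_row_of_mem_rowStochastic (gibbsKer_mem_rowStochastic hπ), mul_one]

lemma gibbsKer_mul_const (hπ : ∀ x, 0 < π x) {ι : Type*} [Fintype ι] (v : ι → ℝ) :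
    gibbsKer π part * (of fun _ y => v y : Matrix (Fin n) ι ℝ) = of fun _ y => v y := by
  ext x y
  simp only [mul_apply, of_apply, ← sum_mul,
    sum_row_of_mem_rowStochastic (gibbsKer_mem_rowStochastic hπ), one_mul]

lemma sum_mul_gibbsKer_mul_apply_mul (hπ : ∀ x, 0 < π x) (N : Matrix (Fin n) (Fin n) ℝ)
    {f : Fin n → Fin n → ℝ} (hf : ∀ x x' y, part x = part x' → f x y = f x' y) :
    ∑ x, ∑ y, π x * (gibbsKer π part * N) x y * f x y = ∑ x, ∑ y, π x * N x y * f x y := by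
  calc ∑ x, ∑ y, π x * (gibbsKer π part * N) x y * f x y
      = ∑ x, ∑ y, ∑ a, π a * N a y * (gibbsKer π part a x * f x y) := by
        simp only [mul_apply, mul_sum, sum_mul]
        refine sum_congr rfl fun x _ => sum_congr rfl fun y _ => sum_congr rfl fun a _ => ?_
        rw [← mul_assoc, mul_gibbsKer_apply_comm]
        ring
    _ = ∑ a, ∑ y, π a * N a y * ∑ x, gibbsKer π part a x * f x y := by
        simp only [mul_sum]
        exact (sum_congr rfl fun _ _ => sum_comm).trans
          (sum_comm.trans (sum_congr rfl fun _ _ => sum_comm))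
    _ = ∑ x, ∑ y, π x * N x y * f x y := by
        simp only [sum_gibbsKer_mul_of_congr hπ fun x x' => hf x x' _]

lemma sum_mul_mul_gibbsKer_apply_mul (hπ : ∀ x, 0 < π x) (N : Matrix (Fin n) (Fin n) ℝ)
    {f : Fin n → Fin n → ℝ} (hf : ∀ x y y', part y = part y' → f x y = f x y') :
    ∑ x, ∑ y, π x * (N * gibbsKer π part) x y * f x y = ∑ x, ∑ y, π x * N x y * f x y := by
  refine sum_congr rfl fun x _ => ?_
  calc ∑ y, π x * (N * gibbsKer π part) x y * f x y
      = ∑ b, π x * N x b * ∑ y, gibbsKer π part b y * f x y := by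
        simp only [mul_apply, mul_sum, sum_mul]
        rw [sum_comm]
        exact sum_congr rfl fun b _ => sum_congr rfl fun y _ => by ring
    _ = ∑ y, π x * N x y * f x y := by
        simp only [sum_gibbsKer_mul_of_congr hπ (hf x)]

lemma gibbsKer_mul_apply_congr (M : Matrix (Fin n) (Fin n) ℝ) {x x' : Fin n}
    (h : part x = part x') (y : Fin n) :
    (gibbsKer π part * M) x y = (gibbsKer π part * M) x' y := by
  simp [mul_apply, gibbsKer, h]

lemma mul_gibbsKer_apply_mul_congr (M : Matrix (Fin n) (Fin n) ℝ) (x : Fin n) {y y' : Fin n}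
    (h : part y = part y') :
    (M * gibbsKer π part) x y * π y' = (M * gibbsKer π part) x y' * π y := by
  simp only [mul_apply, sum_mul]
  refine sum_congr rfl fun b _ => ?_
  simp only [gibbsKer, of_apply, h]
  split_ifs <;> ring

lemma gibbsKer_mul_mul_gibbsKer_div_congr (hπ : ∀ x, 0 < π x) (M N : Matrix (Fin n) (Fin n) ℝ)
    {x x' y y' : Fin n} (hx : part x = part x') (hy : part y = part y') :
    (gibbsKer π part * M * gibbsKer π part) x y / (gibbsKer π part * N * gibbsKer π part) x y
      = (gibbsKer π part * M * gibbsKer π part) x' y'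
        / (gibbsKer π part * N * gibbsKer π part) x' y' := by
  have hrow (L : Matrix (Fin n) (Fin n) ℝ) :
      (gibbsKer π part * L * gibbsKer π part) x y
        = (gibbsKer π part * L * gibbsKer π part) x' y := by
    rw [Matrix.mul_assoc]
    exact gibbsKer_mul_apply_congr _ hx y
  rw [hrow, hrow, ← mul_div_mul_right _ _ (hπ y').ne', mul_gibbsKer_apply_mul_congr _ _ hy,
    mul_gibbsKer_apply_mul_congr _ _ hy, mul_div_mul_right _ _ (hπ y).ne']

lemma gibbsKer_mul_mul_gibbsKer_apply_pos (hπ : ∀ x, 0 < π x) {P : Matrix (Fin n) (Fin n) ℝ}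
    (hP : ∀ x y, 0 ≤ P x y) {x y : Fin n} (hxy : 0 < P x y) :
    0 < (gibbsKer π part * P * gibbsKer π part) x y := by
  have hG := (gibbsKer_mem_rowStochastic (part := part) hπ).1
  exact (mul_pos (mul_pos (gibbsKer_self_pos hπ x) hxy) (gibbsKer_self_pos hπ y)).trans_le
    (mul_mul_apply_le hG hP hG x y)

theorem klDiv_eq_klDiv_gibbsKer_mul_mul_gibbsKer_add (hπ : ∀ x, 0 < π x)
    {P : Matrix (Fin n) (Fin n) ℝ} (hP : ∀ x y, 0 ≤ P x y)
    {Q : Matrix (Fin n) (Fin n) ℝ} (hQpos : ∀ x y, 0 < Q x y)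
    (hQinv : gibbsKer π part * Q * gibbsKer π part = Q) :
    klDiv π P Q
      = klDiv π P (gibbsKer π part * P * gibbsKer π part)
        + klDiv π (gibbsKer π part * P * gibbsKer π part) Q := by
  set R := gibbsKer π part * P * gibbsKer π part with hR
  set f : Fin n → Fin n → ℝ := fun x y => Real.log (R x y / Q x y) with hfdef
  have hf {x x' y y' : Fin n} (hx : part x = part x') (hy : part y = part y') :
      f x y = f x' y' := by
    simp only [hfdef, hR]
    rw [← hQinv, gibbsKer_mul_mul_gibbsKer_div_congr hπ P Q hx hy]
  have hsplit (x y : Fin n) :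
      π x * P x y * Real.log (P x y / Q x y)
        = π x * P x y * Real.log (P x y / R x y) + π x * P x y * f x y := by
    rcases (hP x y).eq_or_lt with h | h
    · simp [← h]
    · have hRxy : 0 < R x y := gibbsKer_mul_mul_gibbsKer_apply_pos hπ hP h
      rw [← mul_add, ← Real.log_mul (div_pos h hRxy).ne' (div_pos hRxy (hQpos x y)).ne',
        div_mul_div_cancel₀ hRxy.ne']
  calc klDiv π P Q = klDiv π P R + ∑ x, ∑ y, π x * P x y * f x y := by
        simp only [klDiv, hsplit, sum_add_distrib]
    _ = klDiv π P R + ∑ x, ∑ y, π x * R x y * f x y := by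
        rw [hR, sum_mul_mul_gibbsKer_apply_mul (f := f) hπ _ fun _ _ _ hy => hf rfl hy,
          sum_mul_gibbsKer_mul_apply_mul (f := f) hπ _ fun _ _ _ hx => hf hx rfl]
    _ = klDiv π P R + klDiv π R Q := rfl

end GibbsKernel

theorem stmt11_general {n k : ℕ}
    (π : Fin n → ℝ) (hπpos : ∀ x, 0 < π x)
    (part : Fin n → Fin k)
    (P : Matrix (Fin n) (Fin n) ℝ)
    (hPnonneg : ∀ x y, 0 ≤ P x y) (hProw : ∀ x, ∑ y, P x y = 1)
    (Q : Matrix (Fin n) (Fin n) ℝ)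
    (hQrow : ∀ x, ∑ y, Q x y = 1)
    (hQinv : gibbsKer π part * Q * gibbsKer π part = Q)
    (hQpos : ∀ x y, 0 < Q x y) :
    klDiv π P Q
        = klDiv π P (gibbsKer π part * P * gibbsKer π part)
          + klDiv π (gibbsKer π part * P * gibbsKer π part) Q ∧
      klDiv π (gibbsKer π part * P * gibbsKer π part) (Matrix.of fun _ y => π y)
        ≤ klDiv π P (Matrix.of fun _ y => π y) ∧
      klDiv π P (gibbsKer π part * P * gibbsKer π part) ≤ klDiv π P Q ∧
      (klDiv π P (gibbsKer π part * P * gibbsKer π part) = klDiv π P Q →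
        Q = gibbsKer π part * P * gibbsKer π part) := by
  have hG := gibbsKer_mem_rowStochastic (part := part) hπpos
  have hP : P ∈ rowStochastic ℝ (Fin n) := mem_rowStochastic_iff_sum.2 ⟨hPnonneg, hProw⟩
  have hQ : Q ∈ rowStochastic ℝ (Fin n) :=
    mem_rowStochastic_iff_sum.2 ⟨fun x y => (hQpos x y).le, hQrow⟩
  have hR := mul_mem (mul_mem hG hP) hG
  have hPR (x y : Fin n) (h : (gibbsKer π part * P * gibbsKer π part) x y = 0) : P x y = 0 :=
    ((hPnonneg x y).eq_or_lt.resolve_right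
      fun hxy => (gibbsKer_mul_mul_gibbsKer_apply_pos hπpos hPnonneg hxy).ne' h).symm
  have hconst : gibbsKer π part * (Matrix.of fun _ y => π y) * gibbsKer π part
      = Matrix.of fun _ y => π y := by
    rw [gibbsKer_mul_const hπpos, const_mul_gibbsKer hπpos]
  have hPR_nonneg := klDiv_nonneg (fun x => (hπpos x).le) hP hR hPR
  have hRQ_nonneg := klDiv_nonneg (fun x => (hπpos x).le) hR hQ
    fun x y h => absurd h (hQpos x y).ne'
  have hpyth_const := klDiv_eq_klDiv_gibbsKer_mul_mul_gibbsKer_add hπpos hPnonneg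
    (Q := of fun _ y => π y) (fun _ y => hπpos y) hconst
  have hpyth := klDiv_eq_klDiv_gibbsKer_mul_mul_gibbsKer_add hπpos hPnonneg hQpos hQinv
  refine ⟨hpyth, by linarith, by linarith,
    fun h => (eq_of_klDiv_eq_zero hπpos hR hQrow hQpos (by linarith)).symm⟩

/-- the Pythagorean identity
`D^π(P‖Q) = D^π(P‖GPG) + D^π(GPG‖Q)` for any `Q` in the `G`-invariant set with positive
entries; in particular `D^π(P‖Π) ≥ D^π(GPG‖Π)`, and `GPG` is the unique information
projection of `P` onto the invariant set. -/
theorem stmt11 {n k : ℕ} (hn : 0 < n)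
    (π : Fin n → ℝ) (hπpos : ∀ x, 0 < π x) (hπsum : ∑ x, π x = 1)
    (part : Fin n → Fin k) (hpart : Function.Surjective part)
    (P : Matrix (Fin n) (Fin n) ℝ)
    (hPnonneg : ∀ x y, 0 ≤ P x y) (hProw : ∀ x, ∑ y, P x y = 1)
    (hPstat : ∀ y, ∑ x, π x * P x y = π y)
    (Q : Matrix (Fin n) (Fin n) ℝ)
    (hQnonneg : ∀ x y, 0 ≤ Q x y) (hQrow : ∀ x, ∑ y, Q x y = 1)
    (hQstat : ∀ y, ∑ x, π x * Q x y = π y)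
    (hQinv : gibbsKer π part * Q * gibbsKer π part = Q)
    (hQpos : ∀ x y, 0 < Q x y) :
    klDiv π P Q
        = klDiv π P (gibbsKer π part * P * gibbsKer π part)
          + klDiv π (gibbsKer π part * P * gibbsKer π part) Q ∧
      klDiv π (gibbsKer π part * P * gibbsKer π part) (Matrix.of fun _ y => π y)
        ≤ klDiv π P (Matrix.of fun _ y => π y) ∧
      klDiv π P (gibbsKer π part * P * gibbsKer π part) ≤ klDiv π P Q ∧
      (klDiv π P (gibbsKer π part * P * gibbsKer π part) = klDiv π P Q →
        Q = gibbsKer π part * P * gibbsKer π part) :=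
  stmt11_general π hπpos part P hPnonneg hProw Q hQrow hQinv hQpos
end
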